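/- Suppose an equilateral triangle T(A,B,C), or a trapezoid with its parallel sides on the horizontal lines with oblique second coordinate B and B+C, is tiled by equilateral triangles T(aᵢ,bᵢ,cᵢ), i = 1,…,n, and r : ℝ → ℝ satisfies r(B) = B, r(B+C) = B+C, and r(aᵢ+cᵢ) − r(aᵢ) = r(bᵢ+cᵢ) − r(bᵢ) for all i. Then r(bᵢ) = bᵢ and r(bᵢ+cᵢ) = bᵢ+cᵢ for every i. -/

import Mathlib

open Set Finset

/-- Oblique-coordinate (sheared) closed triangle. -/
def Sset (a b c : ℝ) : Set (ℝ × ℝ) :=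
  {p | (0 < c ∧ a ≤ p.1 ∧ b ≤ p.2 ∧ p.1 + p.2 ≤ a + b + c) ∨
       (c < 0 ∧ p.1 ≤ a ∧ p.2 ≤ b ∧ a + b + c ≤ p.1 + p.2)}

/-- Oblique-coordinate open triangle. -/
def Iset (a b c : ℝ) : Set (ℝ × ℝ) :=
  {p | (0 < c ∧ a < p.1 ∧ b < p.2 ∧ p.1 + p.2 < a + b + c) ∨
       (c < 0 ∧ p.1 < a ∧ p.2 < b ∧ a + b + c < p.1 + p.2)}

/-- Oblique-coordinate trapezoidal region. -/
def Rgn (B H u₁ v₁ u₂ v₂ : ℝ) : Set (ℝ × ℝ) :=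
  {p | B ≤ p.2 ∧ p.2 ≤ B + H ∧ (p.2 - B) * (u₂ - u₁) ≤ H * (p.1 - u₁) ∧
       H * (p.1 - v₁) ≤ (p.2 - B) * (v₂ - v₁)}

lemma mem_S_pos {a b c : ℝ} (h : 0 < c) {p : ℝ × ℝ} :
    p ∈ Sset a b c ↔ (a ≤ p.1 ∧ b ≤ p.2 ∧ p.1 + p.2 ≤ a + b + c) := by
  constructor
  · rintro (⟨_, h2⟩ | ⟨h1, _⟩)
    · exact h2
    · linarith
  · intro h2; exact Or.inl ⟨h, h2⟩

lemma mem_S_neg {a b c : ℝ} (h : c < 0) {p : ℝ × ℝ} :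
    p ∈ Sset a b c ↔ (p.1 ≤ a ∧ p.2 ≤ b ∧ a + b + c ≤ p.1 + p.2) := by
  constructor
  · rintro (⟨h1, _⟩ | ⟨_, h2⟩)
    · linarith
    · exact h2
  · intro h2; exact Or.inr ⟨h, h2⟩

lemma mem_I_pos {a b c : ℝ} (h : 0 < c) {p : ℝ × ℝ} :
    p ∈ Iset a b c ↔ (a < p.1 ∧ b < p.2 ∧ p.1 + p.2 < a + b + c) := by
  constructor
  · rintro (⟨_, h2⟩ | ⟨h1, _⟩)
    · exact h2
    · linarith
  · intro h2; exact Or.inl ⟨h, h2⟩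

lemma mem_I_neg {a b c : ℝ} (h : c < 0) {p : ℝ × ℝ} :
    p ∈ Iset a b c ↔ (p.1 < a ∧ p.2 < b ∧ a + b + c < p.1 + p.2) := by
  constructor
  · rintro (⟨h1, _⟩ | ⟨_, h2⟩)
    · linarith
    · exact h2
  · intro h2; exact Or.inr ⟨h, h2⟩

/-- Negation symmetry for tiles. -/
lemma mem_Sset_neg {a b c x y : ℝ} :
    ((x, y) : ℝ × ℝ) ∈ Sset (-a) (-b) (-c) ↔ ((-x, -y) : ℝ × ℝ) ∈ Sset a b c := by
  simp only [Sset, mem_setOf_eq]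
  constructor
  · rintro (⟨h1, h2, h3, h4⟩ | ⟨h1, h2, h3, h4⟩)
    · exact Or.inr ⟨by linarith, by linarith, by linarith, by linarith⟩
    · exact Or.inl ⟨by linarith, by linarith, by linarith, by linarith⟩
  · rintro (⟨h1, h2, h3, h4⟩ | ⟨h1, h2, h3, h4⟩)
    · exact Or.inr ⟨by linarith, by linarith, by linarith, by linarith⟩
    · exact Or.inl ⟨by linarith, by linarith, by linarith, by linarith⟩

lemma mem_Iset_neg {a b c x y : ℝ} :
    ((x, y) : ℝ × ℝ) ∈ Iset (-a) (-b) (-c) ↔ ((-x, -y) : ℝ × ℝ) ∈ Iset a b c := by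
  simp only [Iset, mem_setOf_eq]
  constructor
  · rintro (⟨h1, h2, h3, h4⟩ | ⟨h1, h2, h3, h4⟩)
    · exact Or.inr ⟨by linarith, by linarith, by linarith, by linarith⟩
    · exact Or.inl ⟨by linarith, by linarith, by linarith, by linarith⟩
  · rintro (⟨h1, h2, h3, h4⟩ | ⟨h1, h2, h3, h4⟩)
    · exact Or.inr ⟨by linarith, by linarith, by linarith, by linarith⟩
    · exact Or.inl ⟨by linarith, by linarith, by linarith, by linarith⟩

lemma mem_Rgn_neg {B H u₁ v₁ u₂ v₂ x y : ℝ} :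
    ((x, y) : ℝ × ℝ) ∈ Rgn (-(B + H)) H (-v₂) (-u₂) (-v₁) (-u₁) ↔
      ((-x, -y) : ℝ × ℝ) ∈ Rgn B H u₁ v₁ u₂ v₂ := by
  simp only [Rgn, mem_setOf_eq]
  constructor
  · rintro ⟨h1, h2, h3, h4⟩
    refine ⟨by linarith, by linarith, by nlinarith, by nlinarith⟩
  · rintro ⟨h1, h2, h3, h4⟩
    refine ⟨by linarith, by linarith, by nlinarith, by nlinarith⟩

/-- Pigeonhole: a family of witnesses at arbitrarily small scales concentrates on one index. -/
lemma pigeon {n : ℕ} (i0 : Fin n) (P : ℝ → Fin n → Prop)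
    (h : ∀ δ, 0 < δ → ∃ ε, 0 < ε ∧ ε < δ ∧ ∃ j, P ε j) :
    ∃ j, ∀ δ, 0 < δ → ∃ ε, 0 < ε ∧ ε < δ ∧ P ε j := by
  by_contra hcon
  push_neg at hcon
  choose δf hδf hno using hcon
  have hne : (Finset.univ : Finset (Fin n)).Nonempty := ⟨i0, Finset.mem_univ i0⟩
  set D := Finset.univ.inf' hne δf with hD
  have hDpos : 0 < D := by
    rw [hD, Finset.lt_inf'_iff]
    intro i _; exact hδf i
  obtain ⟨ε, hε1, hε2, j, hP⟩ := h D hDpos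
  exact hno j ε hε1 (lt_of_lt_of_le hε2 (Finset.inf'_le _ (Finset.mem_univ j))) hP

lemma le_lim {x y : ℝ} (h : ∀ δ, 0 < δ → ∃ ε, 0 < ε ∧ ε < δ ∧ x ≤ y + ε) : x ≤ y := by
  by_contra hc
  push_neg at hc
  obtain ⟨ε, h1, h2, h3⟩ := h (x - y) (by linarith)
  linarith

lemma covdown {B H u₁ v₁ u₂ v₂ x y : ℝ} (hH : 0 < H) (hyB : B < y) (hyH : y ≤ B + H)
    (hl : (y - B) * (u₂ - u₁) < H * (x - u₁)) (hr : H * (x - v₁) < (y - B) * (v₂ - v₁)) :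
    ∀ δ, 0 < δ → ∃ ε, 0 < ε ∧ ε < δ ∧ ((x, y - ε) : ℝ × ℝ) ∈ Rgn B H u₁ v₁ u₂ v₂ := by
  intro δ hδ
  set g₁ := H * (x - u₁) - (y - B) * (u₂ - u₁) with hg₁
  set g₂ := (y - B) * (v₂ - v₁) - H * (x - v₁) with hg₂
  have hg₁p : 0 < g₁ := by simp [hg₁]; linarith
  have hg₂p : 0 < g₂ := by simp [hg₂]; linarith
  have ha₁ : (0:ℝ) < 1 + |u₂ - u₁| := by positivity
  have ha₂ : (0:ℝ) < 1 + |v₂ - v₁| := by positivity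
  set ε := min (min (δ/2) ((y - B)/2)) (min (g₁ / (2 * (1 + |u₂ - u₁|))) (g₂ / (2 * (1 + |v₂ - v₁|)))) with hε
  have hεpos : 0 < ε := by
    apply lt_min (lt_min (by linarith) (by linarith)) (lt_min (by positivity) (by positivity))
  have hεδ : ε ≤ δ/2 := le_trans (min_le_left _ _) (min_le_left _ _)
  have hεy : ε ≤ (y - B)/2 := le_trans (min_le_left _ _) (min_le_right _ _)
  have hεg₁ : ε ≤ g₁ / (2 * (1 + |u₂ - u₁|)) := le_trans (min_le_right _ _) (min_le_left _ _)
  have hεg₂ : ε ≤ g₂ / (2 * (1 + |v₂ - v₁|)) := le_trans (min_le_right _ _) (min_le_right _ _)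
  refine ⟨ε, hεpos, by linarith, ?_, ?_, ?_, ?_⟩
  · show B ≤ y - ε; linarith
  · show y - ε ≤ B + H; linarith
  · show (y - ε - B) * (u₂ - u₁) ≤ H * (x - u₁)
    have h1 : ε * (1 + |u₂ - u₁|) ≤ g₁ / 2 := by
      rw [le_div_iff₀ (by positivity)] at hεg₁; linarith [hεg₁]
    have h2 : -(ε * (u₂ - u₁)) ≤ ε * |u₂ - u₁| := by
      have := neg_abs_le (u₂ - u₁)
      nlinarith [hεpos.le]
    nlinarith [hεpos.le]
  · show H * (x - v₁) ≤ (y - ε - B) * (v₂ - v₁)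
    have h1 : ε * (1 + |v₂ - v₁|) ≤ g₂ / 2 := by
      rw [le_div_iff₀ (by positivity)] at hεg₂; linarith [hεg₂]
    have h2 : ε * (v₂ - v₁) ≤ ε * |v₂ - v₁| := by
      have := le_abs_self (v₂ - v₁)
      nlinarith [hεpos.le]
    nlinarith [hεpos.le]

lemma covup {B H u₁ v₁ u₂ v₂ x y : ℝ} (hH : 0 < H) (hyB : B ≤ y) (hyH : y < B + H)
    (hl : (y - B) * (u₂ - u₁) < H * (x - u₁)) (hr : H * (x - v₁) < (y - B) * (v₂ - v₁)) :
    ∀ δ, 0 < δ → ∃ ε, 0 < ε ∧ ε < δ ∧ ((x, y + ε) : ℝ × ℝ) ∈ Rgn B H u₁ v₁ u₂ v₂ := by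
  intro δ hδ
  set g₁ := H * (x - u₁) - (y - B) * (u₂ - u₁) with hg₁
  set g₂ := (y - B) * (v₂ - v₁) - H * (x - v₁) with hg₂
  have hg₁p : 0 < g₁ := by simp [hg₁]; linarith
  have hg₂p : 0 < g₂ := by simp [hg₂]; linarith
  have ha₁ : (0:ℝ) < 1 + |u₂ - u₁| := by positivity
  have ha₂ : (0:ℝ) < 1 + |v₂ - v₁| := by positivity
  set ε := min (min (δ/2) ((B + H - y)/2)) (min (g₁ / (2 * (1 + |u₂ - u₁|))) (g₂ / (2 * (1 + |v₂ - v₁|)))) with hε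
  have hεpos : 0 < ε := by
    apply lt_min (lt_min (by linarith) (by linarith)) (lt_min (by positivity) (by positivity))
  have hεδ : ε ≤ δ/2 := le_trans (min_le_left _ _) (min_le_left _ _)
  have hεy : ε ≤ (B + H - y)/2 := le_trans (min_le_left _ _) (min_le_right _ _)
  have hεg₁ : ε ≤ g₁ / (2 * (1 + |u₂ - u₁|)) := le_trans (min_le_right _ _) (min_le_left _ _)
  have hεg₂ : ε ≤ g₂ / (2 * (1 + |v₂ - v₁|)) := le_trans (min_le_right _ _) (min_le_right _ _)
  refine ⟨ε, hεpos, by linarith, ?_, ?_, ?_, ?_⟩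
  · show B ≤ y + ε; linarith
  · show y + ε ≤ B + H; linarith
  · show (y + ε - B) * (u₂ - u₁) ≤ H * (x - u₁)
    have h1 : ε * (1 + |u₂ - u₁|) ≤ g₁ / 2 := by
      rw [le_div_iff₀ (by positivity)] at hεg₁; linarith [hεg₁]
    have h2 : ε * (u₂ - u₁) ≤ ε * |u₂ - u₁| := by
      have := le_abs_self (u₂ - u₁)
      nlinarith [hεpos.le]
    nlinarith [hεpos.le]
  · show H * (x - v₁) ≤ (y + ε - B) * (v₂ - v₁)
    have h1 : ε * (1 + |v₂ - v₁|) ≤ g₂ / 2 := by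
      rw [le_div_iff₀ (by positivity)] at hεg₂; linarith [hεg₂]
    have h2 : -(ε * (v₂ - v₁)) ≤ ε * |v₂ - v₁| := by
      have := neg_abs_le (v₂ - v₁)
      nlinarith [hεpos.le]
    nlinarith [hεpos.le]

lemma covwest {B H u₁ v₁ u₂ v₂ x y : ℝ} (hH : 0 < H) (hyB : B ≤ y) (hyH : y ≤ B + H)
    (hl : (y - B) * (u₂ - u₁) < H * (x - u₁)) (hr : H * (x - v₁) ≤ (y - B) * (v₂ - v₁)) :
    ∀ δ, 0 < δ → ∃ ε, 0 < ε ∧ ε < δ ∧ ((x - ε, y) : ℝ × ℝ) ∈ Rgn B H u₁ v₁ u₂ v₂ := by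
  intro δ hδ
  set g₁ := H * (x - u₁) - (y - B) * (u₂ - u₁) with hg₁
  have hg₁p : 0 < g₁ := by simp [hg₁]; linarith
  set ε := min (δ/2) (g₁ / (2 * H)) with hε
  have hεpos : 0 < ε := lt_min (by linarith) (by positivity)
  have hεδ : ε ≤ δ/2 := min_le_left _ _
  have hεg : ε ≤ g₁ / (2 * H) := min_le_right _ _
  have hεg' : ε * (2 * H) ≤ g₁ := by
    rw [le_div_iff₀ (by positivity)] at hεg
    linarith [hεg]
  refine ⟨ε, hεpos, by linarith, hyB, hyH, ?_, ?_⟩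
  · show (y - B) * (u₂ - u₁) ≤ H * (x - ε - u₁)
    nlinarith [hεpos.le]
  · show H * (x - ε - v₁) ≤ (y - B) * (v₂ - v₁)
    nlinarith [hεpos.le, mul_pos hεpos hH]

lemma coveast {B H u₁ v₁ u₂ v₂ x y : ℝ} (hH : 0 < H) (hyB : B ≤ y) (hyH : y ≤ B + H)
    (hl : (y - B) * (u₂ - u₁) ≤ H * (x - u₁)) (hr : H * (x - v₁) < (y - B) * (v₂ - v₁)) :
    ∀ δ, 0 < δ → ∃ ε, 0 < ε ∧ ε < δ ∧ ((x + ε, y) : ℝ × ℝ) ∈ Rgn B H u₁ v₁ u₂ v₂ := by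
  intro δ hδ
  set g₂ := (y - B) * (v₂ - v₁) - H * (x - v₁) with hg₂
  have hg₂p : 0 < g₂ := by simp [hg₂]; linarith
  set ε := min (δ/2) (g₂ / (2 * H)) with hε
  have hεpos : 0 < ε := lt_min (by linarith) (by positivity)
  have hεδ : ε ≤ δ/2 := min_le_left _ _
  have hεg : ε ≤ g₂ / (2 * H) := min_le_right _ _
  have hεg' : ε * (2 * H) ≤ g₂ := by
    rw [le_div_iff₀ (by positivity)] at hεg
    linarith [hεg]
  refine ⟨ε, hεpos, by linarith, hyB, hyH, ?_, ?_⟩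
  · show (y - B) * (u₂ - u₁) ≤ H * (x + ε - u₁)
    nlinarith [hεpos.le, mul_pos hεpos hH]
  · show H * (x + ε - v₁) ≤ (y - B) * (v₂ - v₁)
    nlinarith [hεpos.le]

/-- Up-floor to down-floor matching at a horizontal level. -/
lemma matchdown {n : ℕ} {a b c : Fin n → ℝ}
    (hdisj : ∀ i j, i ≠ j → Iset (a i) (b i) (c i) ∩ Iset (a j) (b j) (c j) = ∅)
    (hc : ∀ j, c j ≠ 0)
    {i : Fin n} (hci : 0 < c i) {x y : ℝ} (hb : b i = y)
    (hx1 : a i < x) (hx2 : x < a i + c i)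
    (hxs : ∀ j, x ≠ a j ∧ x ≠ a j + c j)
    (hcov : ∀ δ, 0 < δ → ∃ ε, 0 < ε ∧ ε < δ ∧ ((x, y - ε) : ℝ × ℝ) ∈ ⋃ j, Sset (a j) (b j) (c j)) :
    ∃ j, c j < 0 ∧ b j = y ∧ a j + c j < x ∧ x < a j := by
  have hcov' : ∀ δ, 0 < δ → ∃ ε, 0 < ε ∧ ε < δ ∧ ∃ j, ((x, y - ε) : ℝ × ℝ) ∈ Sset (a j) (b j) (c j) := by
    intro δ hδ
    obtain ⟨ε, h1, h2, hm⟩ := hcov δ hδ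
    rw [mem_iUnion] at hm
    exact ⟨ε, h1, h2, hm⟩
  obtain ⟨j, hj⟩ := pigeon i _ hcov'
  obtain ⟨ε₁, hε₁, hε₁δ, hm₁⟩ := hj 1 one_pos
  rcases (hc j).lt_or_gt with hneg | hpos
  · -- c j < 0
    rw [mem_S_neg hneg] at hm₁
    obtain ⟨hA, hB, hC⟩ := hm₁
    simp only at hA hB hC
    have hxa : x ≤ a j := hA
    have hyb : y ≤ b j := by
      apply le_lim
      intro δ hδ
      obtain ⟨ε, h1, h2, hm⟩ := hj δ hδ
      rw [mem_S_neg hneg] at hm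
      simp only at hm
      exact ⟨ε, h1, h2, by linarith [hm.2.1]⟩
    have hsum : a j + b j + c j < x + y := by linarith
    rcases eq_or_lt_of_le hyb with heq | hlt
    · -- b j = y : goal
      refine ⟨j, hneg, heq.symm, by linarith [heq], lt_of_le_of_ne hxa (hxs j).1⟩
    · -- b j > y : contradiction
      exfalso
      have hxa' : x < a j := lt_of_le_of_ne hxa (hxs j).1
      set η := min ((a i + c i - x)/2) (min ((b j - y)/2) ((x + y - (a j + b j + c j))/2)) with hη
      have hηpos : 0 < η := lt_min (by linarith) (lt_min (by linarith) (by linarith))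
      have hη1 : η ≤ (a i + c i - x)/2 := min_le_left _ _
      have hη2 : η ≤ (b j - y)/2 := le_trans (min_le_right _ _) (min_le_left _ _)
      have hη3 : η ≤ (x + y - (a j + b j + c j))/2 := le_trans (min_le_right _ _) (min_le_right _ _)
      have hij : i ≠ j := by rintro rfl; linarith
      have hz1 : ((x, y + η) : ℝ × ℝ) ∈ Iset (a i) (b i) (c i) := by
        rw [mem_I_pos hci]
        exact ⟨hx1, by simp only; linarith, by simp only; linarith⟩
      have hz2 : ((x, y + η) : ℝ × ℝ) ∈ Iset (a j) (b j) (c j) := by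
        rw [mem_I_neg hneg]
        exact ⟨hxa', by simp only; linarith, by simp only; linarith⟩
      exact Set.eq_empty_iff_forall_notMem.1 (hdisj i j hij) _ ⟨hz1, hz2⟩
  · -- c j > 0
    rw [mem_S_pos hpos] at hm₁
    obtain ⟨hA, hB, hC⟩ := hm₁
    simp only at hA hB hC
    have hbj : b j < y := by linarith
    have hij : i ≠ j := by rintro rfl; linarith
    have haj : a j < x := lt_of_le_of_ne hA (Ne.symm (hxs j).1)
    have hsum : x + y ≤ a j + b j + c j := by
      apply le_lim
      intro δ hδ
      obtain ⟨ε, h1, h2, hm⟩ := hj δ hδ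
      rw [mem_S_pos hpos] at hm
      simp only at hm
      exact ⟨ε, h1, h2, by linarith [hm.2.2]⟩
    exfalso
    rcases eq_or_lt_of_le hsum with heq | hlt
    · -- on the antidiagonal edge of j
      set η := min ((x - a i)/3) (min ((x - a j)/3) ((a i + c i - x)/2)) with hη
      have hηpos : 0 < η := lt_min (by linarith) (lt_min (by linarith) (by linarith))
      have hη1 : η ≤ (x - a i)/3 := min_le_left _ _
      have hη2 : η ≤ (x - a j)/3 := le_trans (min_le_right _ _) (min_le_left _ _)
      have hη3 : η ≤ (a i + c i - x)/2 := le_trans (min_le_right _ _) (min_le_right _ _)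
      have hz1 : ((x - 2*η, y + η) : ℝ × ℝ) ∈ Iset (a i) (b i) (c i) := by
        rw [mem_I_pos hci]
        refine ⟨by simp only; linarith, by simp only; linarith, by simp only; linarith⟩
      have hz2 : ((x - 2*η, y + η) : ℝ × ℝ) ∈ Iset (a j) (b j) (c j) := by
        rw [mem_I_pos hpos]
        refine ⟨by simp only; linarith, by simp only; linarith, by simp only; linarith⟩
      exact Set.eq_empty_iff_forall_notMem.1 (hdisj i j hij) _ ⟨hz1, hz2⟩
    · -- strictly inside j's halfplane: (x,y) interior to j
      set η := min ((a i + c i - x)/2) ((a j + b j + c j - x - y)/2) with hη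
      have hηpos : 0 < η := lt_min (by linarith) (by linarith)
      have hη1 : η ≤ (a i + c i - x)/2 := min_le_left _ _
      have hη2 : η ≤ (a j + b j + c j - x - y)/2 := min_le_right _ _
      have hz1 : ((x, y + η) : ℝ × ℝ) ∈ Iset (a i) (b i) (c i) := by
        rw [mem_I_pos hci]
        exact ⟨hx1, by simp only; linarith, by simp only; linarith⟩
      have hz2 : ((x, y + η) : ℝ × ℝ) ∈ Iset (a j) (b j) (c j) := by
        rw [mem_I_pos hpos]
        exact ⟨haj, by simp only; linarith, by simp only; linarith⟩
      exact Set.eq_empty_iff_forall_notMem.1 (hdisj i j hij) _ ⟨hz1, hz2⟩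

/-- Down-floor to up-floor matching at a horizontal level (mirror of `matchdown`). -/
lemma matchup {n : ℕ} {a b c : Fin n → ℝ}
    (hdisj : ∀ i j, i ≠ j → Iset (a i) (b i) (c i) ∩ Iset (a j) (b j) (c j) = ∅)
    (hc : ∀ j, c j ≠ 0)
    {i : Fin n} (hci : c i < 0) {x y : ℝ} (hb : b i = y)
    (hx1 : a i + c i < x) (hx2 : x < a i)
    (hxs : ∀ j, x ≠ a j ∧ x ≠ a j + c j)
    (hcov : ∀ δ, 0 < δ → ∃ ε, 0 < ε ∧ ε < δ ∧ ((x, y + ε) : ℝ × ℝ) ∈ ⋃ j, Sset (a j) (b j) (c j)) :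
    ∃ j, 0 < c j ∧ b j = y ∧ a j < x ∧ x < a j + c j := by
  have hdisj' : ∀ i j, i ≠ j →
      Iset (-a i) (-b i) (-c i) ∩ Iset (-a j) (-b j) (-c j) = ∅ := by
    intro i j hij
    rw [Set.eq_empty_iff_forall_notMem]
    rintro ⟨px, py⟩ ⟨h1, h2⟩
    rw [mem_Iset_neg] at h1 h2
    exact Set.eq_empty_iff_forall_notMem.1 (hdisj i j hij) _ ⟨h1, h2⟩
  have hc' : ∀ j, -c j ≠ 0 := fun j => neg_ne_zero.2 (hc j)
  have hcov' : ∀ δ, 0 < δ → ∃ ε, 0 < ε ∧ ε < δ ∧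
      ((-x, -y - ε) : ℝ × ℝ) ∈ ⋃ j, Sset (-a j) (-b j) (-c j) := by
    intro δ hδ
    obtain ⟨ε, h1, h2, hm⟩ := hcov δ hδ
    refine ⟨ε, h1, h2, ?_⟩
    rw [mem_iUnion] at hm ⊢
    obtain ⟨j, hmj⟩ := hm
    refine ⟨j, ?_⟩
    have he : -y - ε = -(y + ε) := by ring
    rw [he, mem_Sset_neg]
    simpa using hmj
  have hxs' : ∀ j, -x ≠ -a j ∧ -x ≠ -a j + -c j := by
    intro j
    constructor
    · intro h; exact (hxs j).1 (by linarith [neg_injective h])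
    · intro h
      apply (hxs j).2
      have h' : -x = -(a j + c j) := by linarith [h]
      linarith [neg_injective h']
  obtain ⟨j, h1, h2, h3, h4⟩ := matchdown (a := fun k => -a k) (b := fun k => -b k)
    (c := fun k => -c k) hdisj' hc' (i := i) (by show (0:ℝ) < -c i; linarith) (y := -y) (by show -b i = -y; rw [hb])
    (by linarith) (by linarith) hxs' hcov'
  exact ⟨j, by linarith, by linarith [neg_injective (show -b j = -y by linarith)],
    by linarith, by linarith⟩

lemma Iset_sub {a b c : ℝ} : Iset a b c ⊆ Sset a b c := by
  rintro p (⟨h1, h2, h3, h4⟩ | ⟨h1, h2, h3, h4⟩)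
  · exact Or.inl ⟨h1, le_of_lt h2, le_of_lt h3, le_of_lt h4⟩
  · exact Or.inr ⟨h1, le_of_lt h2, le_of_lt h3, le_of_lt h4⟩

set_option maxHeartbeats 1000000 in
/-- Every upward apex at an interior level has a horizontal tile edge at its level. -/
lemma apexlemma {n : ℕ} {a b c : Fin n → ℝ}
    (hc : ∀ j, c j ≠ 0)
    (hdisj : ∀ i j, i ≠ j → Iset (a i) (b i) (c i) ∩ Iset (a j) (b j) (c j) = ∅)
    {B H u₁ v₁ u₂ v₂ : ℝ} (hH : 0 < H) (h1 : u₁ ≤ v₁) (h2 : u₂ ≤ v₂)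
    (hnd : u₁ < v₁ ∨ u₂ < v₂)
    (hunion : (⋃ j, Sset (a j) (b j) (c j)) = Rgn B H u₁ v₁ u₂ v₂)
    {i : Fin n} (hci : 0 < c i) (htop : b i + c i < B + H) :
    ∃ j, b j = b i + c i := by
  have hsub : ∀ j, Sset (a j) (b j) (c j) ⊆ Rgn B H u₁ v₁ u₂ v₂ := by
    intro j
    rw [← hunion]
    exact Set.subset_iUnion (fun j => Sset (a j) (b j) (c j)) j
  set x₀ := a i with hx₀
  set y₀ := b i + c i with hy₀
  have hvA : ((a i, b i) : ℝ × ℝ) ∈ Sset (a i) (b i) (c i) :=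
    (mem_S_pos hci).2 ⟨le_refl _, le_refl _, by simp only; linarith⟩
  have hvB : ((a i + c i, b i) : ℝ × ℝ) ∈ Sset (a i) (b i) (c i) :=
    (mem_S_pos hci).2 ⟨by simp only; linarith, le_refl _, by simp only; linarith⟩
  have hvP : ((x₀, y₀) : ℝ × ℝ) ∈ Sset (a i) (b i) (c i) :=
    (mem_S_pos hci).2 ⟨le_refl _, by simp only; linarith, by simp only; linarith⟩
  obtain ⟨hvA1, hvA2, hvA3, hvA4⟩ := hsub i hvA
  obtain ⟨hvB1, hvB2, hvB3, hvB4⟩ := hsub i hvB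
  obtain ⟨hvP1, hvP2, hsl1, hsl2⟩ := hsub i hvP
  simp only at hvA1 hvA2 hvA3 hvA4 hvB1 hvB2 hvB3 hvB4 hvP1 hvP2 hsl1 hsl2
  have hBy₀ : B < y₀ := by linarith
  -- The east phase.
  have eastphase :
      ((y₀ - B) * (u₂ - u₁) = H * (x₀ - u₁) ∨
        (∃ k, c k < 0 ∧ a k = x₀ ∧ y₀ < b k ∧ a k + b k + c k < x₀ + y₀)) →
      H * (x₀ - v₁) < (y₀ - B) * (v₂ - v₁) → ∃ j, b j = y₀ := by
    intro hinfo heast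
    have hEpts : ∀ δ, 0 < δ → ∃ ε, 0 < ε ∧ ε < δ ∧
        ∃ m, ((x₀ + ε, y₀) : ℝ × ℝ) ∈ Sset (a m) (b m) (c m) := by
      intro δ hδ
      obtain ⟨ε, he1, he2, he3⟩ := coveast hH (by linarith) hvP2 hsl1 heast δ hδ
      refine ⟨ε, he1, he2, ?_⟩
      rw [← hunion, mem_iUnion] at he3
      exact he3
    obtain ⟨m, hm⟩ := pigeon i _ hEpts
    obtain ⟨ε₁, hε₁, hε₁δ, hm₁⟩ := hm 1 one_pos
    rcases (hc m).lt_or_gt with hmneg | hmpos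
    · -- m is a down tile
      rw [mem_S_neg hmneg] at hm₁
      obtain ⟨hA, hB, hC⟩ := hm₁
      simp only at hA hB hC
      have ham : x₀ < a m := by linarith
      have hMm : a m + b m + c m ≤ x₀ + y₀ := by
        apply le_lim
        intro δ hδ
        obtain ⟨ε, he1, he2, hmm⟩ := hm δ hδ
        rw [mem_S_neg hmneg] at hmm
        simp only at hmm
        exact ⟨ε, he1, he2, by linarith [hmm.2.2]⟩
      rcases eq_or_lt_of_le hB with heqb | hltb
      · exact ⟨m, heqb.symm⟩
      rcases eq_or_lt_of_le hMm with hMeq | hMlt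
      · -- m sits on the antidiagonal through the apex
        exfalso
        rcases hinfo with hleft | ⟨k, hkneg, hka, hkb, hkM⟩
        · -- left boundary equality: contradiction with region shape
          set δ := (b m - y₀)/3 with hδdef
          have hδpos : 0 < δ := by simp only [hδdef]; linarith
          have hz'm : ((x₀ - δ, y₀ + 2*δ) : ℝ × ℝ) ∈ Iset (a m) (b m) (c m) := by
            rw [mem_I_neg hmneg]
            refine ⟨by simp only; linarith, by simp only; linarith, by simp only; linarith⟩
          obtain ⟨hr1, hr2, hr3, hr4⟩ := hsub m (Iset_sub hz'm)
          simp only at hr3 hr4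
          have hstep : δ * (2*(u₂ - u₁)) ≤ δ * (-H) := by linarith [hr3, hleft]
          have hq1 : 2*(u₂ - u₁) ≤ -H := (mul_le_mul_iff_right₀ hδpos).1 hstep
          have h' : (b i - B)*(u₂-u₁) ≤ (y₀-B)*(u₂-u₁) := by linarith [hvA3, hleft]
          have hbr : (y₀-B)*(u₂-u₁) - (b i - B)*(u₂-u₁) = c i * (u₂-u₁) := by
            rw [hy₀]; ring
          have hq2 : 0 ≤ c i * (u₂-u₁) := by linarith
          have hq3 : c i * 0 ≤ c i * (u₂ - u₁) := by linarith
          have := (mul_le_mul_iff_right₀ hci).1 hq3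
          linarith [hH]
        · -- contradiction with the west vertical tile k
          exfalso
          have hkm : k ≠ m := by rintro rfl; linarith
          set δ := min ((b k - y₀)/3) ((b m - y₀)/3) with hδdef
          have hδpos : 0 < δ := lt_min (by linarith) (by linarith)
          have hδ1 : δ ≤ (b k - y₀)/3 := min_le_left _ _
          have hδ2 : δ ≤ (b m - y₀)/3 := min_le_right _ _
          have hz'k : ((x₀ - δ, y₀ + 2*δ) : ℝ × ℝ) ∈ Iset (a k) (b k) (c k) := by
            rw [mem_I_neg hkneg]
            refine ⟨by simp only; linarith, by simp only; linarith, by simp only; linarith⟩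
          have hz'm : ((x₀ - δ, y₀ + 2*δ) : ℝ × ℝ) ∈ Iset (a m) (b m) (c m) := by
            rw [mem_I_neg hmneg]
            refine ⟨by simp only; linarith, by simp only; linarith, by simp only; linarith⟩
          exact Set.eq_empty_iff_forall_notMem.1 (hdisj k m hkm) _ ⟨hz'k, hz'm⟩
      · -- m is strictly inside: contradiction with tile i
        exfalso
        have him : i ≠ m := by rintro rfl; linarith
        set η := min (c i/3) (min ((a m - x₀)/2) ((x₀ + y₀ - (a m + b m + c m))/2)) with hηdef
        have hηpos : 0 < η := lt_min (by linarith) (lt_min (by linarith) (by linarith))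
        have hη1 : η ≤ c i/3 := min_le_left _ _
        have hη2 : η ≤ (a m - x₀)/2 := le_trans (min_le_right _ _) (min_le_left _ _)
        have hη3 : η ≤ (x₀ + y₀ - (a m + b m + c m))/2 := le_trans (min_le_right _ _) (min_le_right _ _)
        have hz1 : ((x₀ + η, y₀ - 2*η) : ℝ × ℝ) ∈ Iset (a i) (b i) (c i) := by
          rw [mem_I_pos hci]
          refine ⟨by simp only; linarith, by simp only; linarith, by simp only; linarith⟩
        have hz2 : ((x₀ + η, y₀ - 2*η) : ℝ × ℝ) ∈ Iset (a m) (b m) (c m) := by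
          rw [mem_I_neg hmneg]
          refine ⟨by simp only; linarith, by simp only; linarith, by simp only; linarith⟩
        exact Set.eq_empty_iff_forall_notMem.1 (hdisj i m him) _ ⟨hz1, hz2⟩
    · -- m is an up tile
      rw [mem_S_pos hmpos] at hm₁
      obtain ⟨hA, hB, hC⟩ := hm₁
      simp only at hA hB hC
      have him : i ≠ m := by rintro rfl; linarith
      have ham : a m ≤ x₀ := by
        apply le_lim
        intro δ hδ
        obtain ⟨ε, he1, he2, hmm⟩ := hm δ hδ
        rw [mem_S_pos hmpos] at hmm
        simp only at hmm
        exact ⟨ε, he1, he2, by linarith [hmm.1]⟩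
      rcases eq_or_lt_of_le hB with heqb | hltb
      · exact ⟨m, heqb⟩
      exfalso
      set η := min (c i/3) ((y₀ - b m)/3) with hηdef
      have hηpos : 0 < η := lt_min (by linarith) (by linarith)
      have hη1 : η ≤ c i/3 := min_le_left _ _
      have hη2 : η ≤ (y₀ - b m)/3 := min_le_right _ _
      have hz1 : ((x₀ + η, y₀ - 2*η) : ℝ × ℝ) ∈ Iset (a i) (b i) (c i) := by
        rw [mem_I_pos hci]
        refine ⟨by simp only; linarith, by simp only; linarith, by simp only; linarith⟩
      have hz2 : ((x₀ + η, y₀ - 2*η) : ℝ × ℝ) ∈ Iset (a m) (b m) (c m) := by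
        rw [mem_I_pos hmpos]
        refine ⟨by simp only; linarith, by simp only; linarith, by simp only; linarith⟩
      exact Set.eq_empty_iff_forall_notMem.1 (hdisj i m him) _ ⟨hz1, hz2⟩
  -- Now the main case split on whether there is room to the west.
  by_cases hwest : (y₀ - B) * (u₂ - u₁) < H * (x₀ - u₁)
  · -- west room: examine the tiles covering points just west of the apex
    have hWpts : ∀ δ, 0 < δ → ∃ ε, 0 < ε ∧ ε < δ ∧
        ∃ k, ((x₀ - ε, y₀) : ℝ × ℝ) ∈ Sset (a k) (b k) (c k) := by
      intro δ hδ
      obtain ⟨ε, he1, he2, he3⟩ := covwest hH (by linarith) hvP2 hwest hsl2 δ hδ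
      refine ⟨ε, he1, he2, ?_⟩
      rw [← hunion, mem_iUnion] at he3
      exact he3
    obtain ⟨k, hk⟩ := pigeon i _ hWpts
    obtain ⟨ε₁, hε₁, hε₁δ, hk₁⟩ := hk 1 one_pos
    rcases (hc k).lt_or_gt with hkneg | hkpos
    · -- k is a down tile
      rw [mem_S_neg hkneg] at hk₁
      obtain ⟨hA, hB, hC⟩ := hk₁
      simp only at hA hB hC
      have hak : x₀ ≤ a k := by
        apply le_lim
        intro δ hδ
        obtain ⟨ε, he1, he2, hkk⟩ := hk δ hδ
        rw [mem_S_neg hkneg] at hkk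
        simp only at hkk
        exact ⟨ε, he1, he2, by linarith [hkk.1]⟩
      have hMk : a k + b k + c k < x₀ + y₀ := by linarith
      rcases eq_or_lt_of_le hB with heqb | hltb
      · exact ⟨k, heqb.symm⟩
      rcases eq_or_lt_of_le hak with haeq | halt
      · -- k has a vertical edge through the apex: go east
        have heast : H * (x₀ - v₁) < (y₀ - B) * (v₂ - v₁) := by
          rcases eq_or_lt_of_le hsl2 with heq | h
          · exfalso
            set δ := (b k - y₀)/2 with hδdef
            have hδpos : 0 < δ := by simp only [hδdef]; linarith
            have hz'k : ((x₀ - δ, y₀ + 2*δ) : ℝ × ℝ) ∈ Sset (a k) (b k) (c k) := by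
              rw [mem_S_neg hkneg]
              refine ⟨by simp only; linarith, by simp only; linarith, by simp only; linarith⟩
            obtain ⟨hr1, hr2, hr3, hr4⟩ := hsub k hz'k
            simp only at hr3 hr4
            have hstep : δ * (-H) ≤ δ * (2*(v₂ - v₁)) := by linarith [hr4, heq]
            have hq1 : -H ≤ 2*(v₂ - v₁) := (mul_le_mul_iff_right₀ hδpos).1 hstep
            have hbr : (y₀-B)*(v₂-v₁) - (b i - B)*(v₂-v₁) = c i * (v₂-v₁) := by
              rw [hy₀]; ring
            have hbr2 : H*(a i + c i - v₁) - H*(x₀ - v₁) = c i * H := by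
              rw [hx₀]; ring
            have hq3 : c i * H ≤ c i * (-(v₂ - v₁)) := by linarith [hvB4, heq]
            have := (mul_le_mul_iff_right₀ hci).1 hq3
            linarith [hH]
          · exact h
        exact eastphase (Or.inr ⟨k, hkneg, haeq.symm, hltb, hMk⟩) heast
      · -- apex strictly inside k: contradiction
        exfalso
        have hik : i ≠ k := by rintro rfl; linarith
        set η := min (c i/3) (min ((a k - x₀)/2) ((x₀ + y₀ - (a k + b k + c k))/2)) with hηdef
        have hηpos : 0 < η := lt_min (by linarith) (lt_min (by linarith) (by linarith))
        have hη1 : η ≤ c i/3 := min_le_left _ _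
        have hη2 : η ≤ (a k - x₀)/2 := le_trans (min_le_right _ _) (min_le_left _ _)
        have hη3 : η ≤ (x₀ + y₀ - (a k + b k + c k))/2 := le_trans (min_le_right _ _) (min_le_right _ _)
        have hz1 : ((x₀ + η, y₀ - 2*η) : ℝ × ℝ) ∈ Iset (a i) (b i) (c i) := by
          rw [mem_I_pos hci]
          refine ⟨by simp only; linarith, by simp only; linarith, by simp only; linarith⟩
        have hz2 : ((x₀ + η, y₀ - 2*η) : ℝ × ℝ) ∈ Iset (a k) (b k) (c k) := by
          rw [mem_I_neg hkneg]
          refine ⟨by simp only; linarith, by simp only; linarith, by simp only; linarith⟩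
        exact Set.eq_empty_iff_forall_notMem.1 (hdisj i k hik) _ ⟨hz1, hz2⟩
    · -- k is an up tile
      rw [mem_S_pos hkpos] at hk₁
      obtain ⟨hA, hB, hC⟩ := hk₁
      simp only at hA hB hC
      have hik : i ≠ k := by rintro rfl; simp only [hx₀] at hA; linarith
      have hak : a k < x₀ := by linarith
      have hMk : x₀ + y₀ ≤ a k + b k + c k := by
        apply le_lim
        intro δ hδ
        obtain ⟨ε, he1, he2, hkk⟩ := hk δ hδ
        rw [mem_S_pos hkpos] at hkk
        simp only at hkk
        exact ⟨ε, he1, he2, by linarith [hkk.2.2]⟩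
      rcases eq_or_lt_of_le hB with heqb | hltb
      · exact ⟨k, heqb⟩
      exfalso
      set η := min (c i/3) ((y₀ - b k)/3) with hηdef
      have hηpos : 0 < η := lt_min (by linarith) (by linarith)
      have hη1 : η ≤ c i/3 := min_le_left _ _
      have hη2 : η ≤ (y₀ - b k)/3 := min_le_right _ _
      have hz1 : ((x₀ + η, y₀ - 2*η) : ℝ × ℝ) ∈ Iset (a i) (b i) (c i) := by
        rw [mem_I_pos hci]
        refine ⟨by simp only; linarith, by simp only; linarith, by simp only; linarith⟩
      have hz2 : ((x₀ + η, y₀ - 2*η) : ℝ × ℝ) ∈ Iset (a k) (b k) (c k) := by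
        rw [mem_I_pos hkpos]
        refine ⟨by simp only; linarith, by simp only; linarith, by simp only; linarith⟩
      exact Set.eq_empty_iff_forall_notMem.1 (hdisj i k hik) _ ⟨hz1, hz2⟩
  · -- no west room: the apex is on the left boundary line
    have hleft : (y₀ - B) * (u₂ - u₁) = H * (x₀ - u₁) := le_antisymm hsl1 (not_lt.1 hwest)
    have heast : H * (x₀ - v₁) < (y₀ - B) * (v₂ - v₁) := by
      rcases eq_or_lt_of_le hsl2 with heq | h
      · exfalso
        have key : (y₀ - B) * ((v₁ - u₁) - (v₂ - u₂)) = H * (v₁ - u₁) := by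
          linear_combination hleft + heq
        rcases hnd with hα | hβ
        · have e1 : 0 < (H - (y₀ - B)) * (v₁ - u₁) := mul_pos (by linarith) (by linarith)
          have e2 : 0 ≤ (y₀ - B) * (v₂ - u₂) := mul_nonneg (by linarith) (by linarith)
          linarith [key, e1, e2]
        · have e1 : 0 ≤ (H - (y₀ - B)) * (v₁ - u₁) := mul_nonneg (by linarith) (by linarith)
          have e2 : 0 < (y₀ - B) * (v₂ - u₂) := mul_pos (by linarith) (by linarith)
          linarith [key, e1, e2]
      · exact h
    exact eastphase (Or.inl hleft) heast

/-- Mirror of `apexlemma` for downward apexes. -/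
lemma apexdown {n : ℕ} {a b c : Fin n → ℝ}
    (hc : ∀ j, c j ≠ 0)
    (hdisj : ∀ i j, i ≠ j → Iset (a i) (b i) (c i) ∩ Iset (a j) (b j) (c j) = ∅)
    {B H u₁ v₁ u₂ v₂ : ℝ} (hH : 0 < H) (h1 : u₁ ≤ v₁) (h2 : u₂ ≤ v₂)
    (hnd : u₁ < v₁ ∨ u₂ < v₂)
    (hunion : (⋃ j, Sset (a j) (b j) (c j)) = Rgn B H u₁ v₁ u₂ v₂)
    {i : Fin n} (hci : c i < 0) (hbot : B < b i + c i) :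
    ∃ j, b j = b i + c i := by
  have hdisj' : ∀ i j, i ≠ j →
      Iset (-a i) (-b i) (-c i) ∩ Iset (-a j) (-b j) (-c j) = ∅ := by
    intro i j hij
    rw [Set.eq_empty_iff_forall_notMem]
    rintro ⟨px, py⟩ ⟨hq1, hq2⟩
    rw [mem_Iset_neg] at hq1 hq2
    exact Set.eq_empty_iff_forall_notMem.1 (hdisj i j hij) _ ⟨hq1, hq2⟩
  have hc' : ∀ j, -c j ≠ 0 := fun j => neg_ne_zero.2 (hc j)
  have hunion' : (⋃ j, Sset (-a j) (-b j) (-c j)) =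
      Rgn (-(B + H)) H (-v₂) (-u₂) (-v₁) (-u₁) := by
    ext q
    rw [mem_iUnion]
    constructor
    · rintro ⟨j, hj⟩
      have hj' : ((-q.1, -q.2) : ℝ × ℝ) ∈ Sset (a j) (b j) (c j) := by
        rw [← mem_Sset_neg]
        simpa using hj
      have : ((-q.1, -q.2) : ℝ × ℝ) ∈ Rgn B H u₁ v₁ u₂ v₂ := by
        rw [← hunion, mem_iUnion]; exact ⟨j, hj'⟩
      rw [← mem_Rgn_neg] at this
      simpa using this
    · intro hq
      have hq2 : ((q.1, q.2) : ℝ × ℝ) ∈ Rgn (-(B + H)) H (-v₂) (-u₂) (-v₁) (-u₁) := by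
        simpa using hq
      rw [mem_Rgn_neg] at hq2
      rw [← hunion, mem_iUnion] at hq2
      obtain ⟨j, hj⟩ := hq2
      refine ⟨j, ?_⟩
      have := (mem_Sset_neg (a := a j) (b := b j) (c := c j) (x := q.1) (y := q.2)).2 hj
      simpa using this
  obtain ⟨j, hj⟩ := apexlemma (a := fun k => -a k) (b := fun k => -b k) (c := fun k => -c k)
    hc' hdisj' hH (by linarith) (by linarith) (by rcases hnd with h | h; exacts [Or.inr (by linarith), Or.inl (by linarith)])
    hunion' (i := i) (by show (0:ℝ) < -c i; linarith)
    (by show -b i + -c i < -(B + H) + H; linarith)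
  refine ⟨j, ?_⟩
  have : -b j = -b i + -c i := hj
  linarith

lemma pickz (G : Finset ℝ) (lo hi : ℝ) (h : lo < hi) :
    ∃ z, lo < z ∧ z < hi ∧ z ∉ G ∧ ∀ g ∈ G, g < hi → g < z := by
  classical
  set L := insert lo (G.filter (fun g => g < hi)) with hL
  have hem : lo ∈ L := Finset.mem_insert_self _ _
  have hne : L.Nonempty := ⟨lo, hem⟩
  set m := L.max' hne with hm
  have hmlt : m < hi := by
    rw [hm, Finset.max'_lt_iff]
    intro y hy
    rcases Finset.mem_insert.1 hy with h' | h'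
    · rw [h']; exact h
    · exact (Finset.mem_filter.1 h').2
  have hlom : lo ≤ m := Finset.le_max' L lo hem
  refine ⟨(m + hi)/2, by linarith, by linarith, ?_, ?_⟩
  · intro hzG
    have : (m + hi)/2 ∈ L := Finset.mem_insert_of_mem (Finset.mem_filter.2 ⟨hzG, by linarith⟩)
    have := Finset.le_max' L _ this
    rw [← hm] at this
    linarith
  · intro g hg hghi
    have : g ∈ L := Finset.mem_insert_of_mem (Finset.mem_filter.2 ⟨hg, hghi⟩)
    have := Finset.le_max' L _ this
    rw [← hm] at this
    linarith


lemma intervalSum (φ : ℝ → ℝ) :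
    ∀ N : ℕ, ∀ s t : Finset (ℝ × ℝ), ∀ F : Finset ℝ,
      s.card + t.card ≤ N →
      (∀ P ∈ s, P.1 < P.2) → (∀ P ∈ t, P.1 < P.2) →
      (∀ P ∈ s, ∀ Q ∈ s, P ≠ Q → P.2 ≤ Q.1 ∨ Q.2 ≤ P.1) →
      (∀ P ∈ t, ∀ Q ∈ t, P ≠ Q → P.2 ≤ Q.1 ∨ Q.2 ≤ P.1) →
      (∀ z : ℝ, z ∉ F → ((∃ P ∈ s, P.1 < z ∧ z < P.2) ↔ ∃ P ∈ t, P.1 < z ∧ z < P.2)) →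
      ∑ P ∈ s, (φ P.2 - φ P.1) = ∑ P ∈ t, (φ P.2 - φ P.1) := by
  intro N
  induction N with
  | zero =>
    intro s t F hcard _ _ _ _ _
    have hs0 : s = ∅ := Finset.card_eq_zero.1 (by omega)
    have ht0 : t = ∅ := Finset.card_eq_zero.1 (by omega)
    simp [hs0, ht0]
  | succ N ih =>
    intro s t F hcard hs ht hds hdt hm
    classical
    by_cases hse : s = ∅
    · subst hse
      have ht0 : t = ∅ := by
        by_contra hte
        obtain ⟨Q, hQ⟩ := Finset.nonempty_iff_ne_empty.2 hte
        obtain ⟨z, hz, hzF⟩ := (Set.Ioo_infinite (ht Q hQ)).exists_notMem_finset F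
        obtain ⟨P, hP, -⟩ := (hm z hzF).2 ⟨Q, hQ, hz.1, hz.2⟩
        exact absurd hP (Finset.notMem_empty P)
      simp [ht0]
    · obtain ⟨x₀, hx₀s, hx₀max⟩ :=
        Finset.exists_max_image s Prod.snd (Finset.nonempty_iff_ne_empty.2 hse)
      set G := F ∪ (s ∪ t).image Prod.fst ∪ (s ∪ t).image Prod.snd with hG
      have hFG : F ⊆ G := by
        intro z hz
        exact Finset.mem_union_left _ (Finset.mem_union_left _ hz)
      have hsndG : ∀ P, P ∈ s ∪ t → P.2 ∈ G := by
        intro P hP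
        exact Finset.mem_union_right _ (Finset.mem_image_of_mem Prod.snd hP)
      obtain ⟨z₁, hz₁lo, hz₁hi, hz₁G, hz₁max⟩ := pickz G x₀.1 x₀.2 (hs x₀ hx₀s)
      obtain ⟨y₀, hy₀t, hy₀1, hy₀2⟩ :=
        (hm z₁ (fun h => hz₁G (hFG h))).1 ⟨x₀, hx₀s, hz₁lo, hz₁hi⟩
      have hy₀2G : y₀.2 ∈ G := hsndG y₀ (Finset.mem_union_right _ hy₀t)
      have hy2ge : x₀.2 ≤ y₀.2 := by
        by_contra hlt'
        push_neg at hlt'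
        exact absurd hy₀2 (by linarith [hz₁max y₀.2 hy₀2G hlt'])
      have hyx : y₀.2 = x₀.2 := by
        rcases eq_or_lt_of_le hy2ge with heq | hgt
        · exact heq.symm
        · exfalso
          obtain ⟨z₂, hz₂lo, hz₂hi, hz₂G, _⟩ := pickz G x₀.2 y₀.2 hgt
          obtain ⟨P, hPs, hP1, hP2⟩ :=
            (hm z₂ (fun h => hz₂G (hFG h))).2 ⟨y₀, hy₀t, by linarith, hz₂hi⟩
          have := hx₀max P hPs
          linarith
      have hcards : 1 ≤ s.card := Finset.card_pos.2 ⟨x₀, hx₀s⟩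
      have hcardt : 1 ≤ t.card := Finset.card_pos.2 ⟨y₀, hy₀t⟩
      have hxlen := hs x₀ hx₀s
      have hylen := ht y₀ hy₀t
      rcases lt_trichotomy y₀.1 x₀.1 with hlt | heq1 | hgt
      · -- y₀.1 < x₀.1 : shrink y₀ to (y₀.1, x₀.1)
        set P' : ℝ × ℝ := (y₀.1, x₀.1) with hP'
        have hP'new : P' ∉ t.erase y₀ := by
          intro hmem
          obtain ⟨hne', hmem'⟩ := Finset.mem_erase.1 hmem
          rcases hdt P' hmem' y₀ hy₀t hne' with h' | h'
          · simp only [hP'] at h'; linarith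
          · simp only [hP'] at h'; linarith
        have key := ih (s.erase x₀) (insert P' (t.erase y₀))
          (insert x₀.1 (insert x₀.2 (insert y₀.1 F)))
          (by
            have d1 : (s.erase x₀).card = s.card - 1 := Finset.card_erase_of_mem hx₀s
            have d2 : (t.erase y₀).card = t.card - 1 := Finset.card_erase_of_mem hy₀t
            have d3 : (insert P' (t.erase y₀)).card = (t.erase y₀).card + 1 :=
              Finset.card_insert_of_notMem hP'new
            omega)
          (fun P hP => hs P (Finset.mem_of_mem_erase hP))
          (by
            intro P hP
            rcases Finset.mem_insert.1 hP with h' | h'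
            · rw [h']; exact hlt
            · exact ht P (Finset.mem_of_mem_erase h'))
          (fun P hP Q hQ hne' =>
            hds P (Finset.mem_of_mem_erase hP) Q (Finset.mem_of_mem_erase hQ) hne')
          (by
            intro P hP Q hQ hne'
            rcases Finset.mem_insert.1 hP with hiP | hiP <;>
              rcases Finset.mem_insert.1 hQ with hiQ | hiQ
            · exact absurd (hiP.trans hiQ.symm) hne'
            · subst hiP
              have hQy : Q ≠ y₀ := (Finset.mem_erase.1 hiQ).1
              rcases hdt y₀ hy₀t Q (Finset.mem_of_mem_erase hiQ) (fun h => hQy h.symm) with h' | h'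
              · left; show P'.2 ≤ Q.1; simp only [hP']; linarith
              · right; show Q.2 ≤ P'.1; simp only [hP']; linarith
            · subst hiQ
              have hPy : P ≠ y₀ := (Finset.mem_erase.1 hiP).1
              rcases hdt y₀ hy₀t P (Finset.mem_of_mem_erase hiP) (fun h => hPy h.symm) with h' | h'
              · right; show P'.2 ≤ P.1; simp only [hP']; linarith
              · left; show P.2 ≤ P'.1; simp only [hP']; linarith
            · exact hdt P (Finset.mem_of_mem_erase hiP) Q (Finset.mem_of_mem_erase hiQ) hne')
          (by
            intro z hz
            have hzx1 : z ≠ x₀.1 := fun h => hz (by rw [h]; exact Finset.mem_insert_self _ _)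
            have hzx2 : z ≠ x₀.2 := fun h => hz (by rw [h]; exact Finset.mem_insert_of_mem (Finset.mem_insert_self _ _))
            have hzy1 : z ≠ y₀.1 := fun h => hz (by rw [h]; exact Finset.mem_insert_of_mem (Finset.mem_insert_of_mem (Finset.mem_insert_self _ _)))
            have hzF : z ∉ F := fun h => hz (Finset.mem_insert_of_mem (Finset.mem_insert_of_mem (Finset.mem_insert_of_mem h)))
            by_cases hzin : x₀.1 < z ∧ z < x₀.2
            · constructor
              · rintro ⟨P, hP, hP1, hP2⟩
                exfalso
                have hPx : P ≠ x₀ := (Finset.mem_erase.1 hP).1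
                rcases hds P (Finset.mem_of_mem_erase hP) x₀ hx₀s hPx with h' | h'
                · linarith [hzin.1]
                · linarith [hzin.2]
              · rintro ⟨P, hP, hP1, hP2⟩
                exfalso
                rcases Finset.mem_insert.1 hP with h' | h'
                · subst h'; simp only [hP'] at hP1 hP2; linarith [hzin.1]
                · have hPy : P ≠ y₀ := (Finset.mem_erase.1 h').1
                  rcases hdt P (Finset.mem_of_mem_erase h') y₀ hy₀t hPy with hd | hd
                  · linarith [hzin.1]
                  · linarith [hzin.2]
            · by_cases hzmid : y₀.1 < z ∧ z < x₀.1
              · constructor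
                · intro _
                  exact ⟨P', Finset.mem_insert_self _ _, hzmid.1, hzmid.2⟩
                · intro _
                  obtain ⟨P, hP, hP1, hP2⟩ :=
                    (hm z hzF).2 ⟨y₀, hy₀t, hzmid.1, by linarith [hzmid.2]⟩
                  refine ⟨P, Finset.mem_erase.2 ⟨?_, hP⟩, hP1, hP2⟩
                  rintro rfl
                  linarith [hzmid.2]
              · have hout : z < y₀.1 ∨ x₀.2 < z := by
                  rcases lt_trichotomy z y₀.1 with h' | h' | h'
                  · exact Or.inl h'
                  · exact absurd h' hzy1
                  · rcases lt_trichotomy z x₀.1 with hb | hb | hb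
                    · exact absurd ⟨h', hb⟩ hzmid
                    · exact absurd hb hzx1
                    · rcases lt_trichotomy z x₀.2 with hcc | hcc | hcc
                      · exact absurd ⟨hb, hcc⟩ hzin
                      · exact absurd hcc hzx2
                      · exact Or.inr hcc
                constructor
                · rintro ⟨P, hP, hP1, hP2⟩
                  obtain ⟨Q, hQ, hQ1, hQ2⟩ :=
                    (hm z hzF).1 ⟨P, Finset.mem_of_mem_erase hP, hP1, hP2⟩
                  refine ⟨Q, Finset.mem_insert_of_mem (Finset.mem_erase.2 ⟨?_, hQ⟩), hQ1, hQ2⟩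
                  rintro rfl
                  rcases hout with h' | h'
                  · linarith
                  · linarith
                · rintro ⟨Q, hQ, hQ1, hQ2⟩
                  rcases Finset.mem_insert.1 hQ with h' | h'
                  · exfalso
                    subst h'
                    simp only [hP'] at hQ1 hQ2
                    rcases hout with hb | hb
                    · linarith
                    · linarith
                  · obtain ⟨P, hP, hP1, hP2⟩ :=
                      (hm z hzF).2 ⟨Q, Finset.mem_of_mem_erase h', hQ1, hQ2⟩
                    refine ⟨P, Finset.mem_erase.2 ⟨?_, hP⟩, hP1, hP2⟩
                    rintro rfl
                    rcases hout with hb | hb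
                    · linarith
                    · linarith)
        have e1 : ∑ P ∈ s.erase x₀, (φ P.2 - φ P.1) + (φ x₀.2 - φ x₀.1)
            = ∑ P ∈ s, (φ P.2 - φ P.1) := Finset.sum_erase_add s _ hx₀s
        have e2 : ∑ P ∈ t.erase y₀, (φ P.2 - φ P.1) + (φ y₀.2 - φ y₀.1)
            = ∑ P ∈ t, (φ P.2 - φ P.1) := Finset.sum_erase_add t _ hy₀t
        have e3 : ∑ P ∈ insert P' (t.erase y₀), (φ P.2 - φ P.1)
            = (φ P'.2 - φ P'.1) + ∑ P ∈ t.erase y₀, (φ P.2 - φ P.1) :=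
          Finset.sum_insert hP'new
        have e4 : φ P'.2 - φ P'.1 = φ x₀.1 - φ y₀.1 := by rw [hP']
        have e5 : φ y₀.2 = φ x₀.2 := by rw [hyx]
        rw [e3, e4] at key
        linarith [key, e1, e2]
      · -- y₀.1 = x₀.1 : identical intervals
        have hy₀x : y₀ = x₀ := Prod.ext heq1 hyx
        rw [hy₀x] at hy₀t
        have key := ih (s.erase x₀) (t.erase x₀) (insert x₀.1 (insert x₀.2 F))
          (by
            have d1 : (s.erase x₀).card = s.card - 1 := Finset.card_erase_of_mem hx₀s
            have d2 : (t.erase x₀).card = t.card - 1 := Finset.card_erase_of_mem hy₀t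
            omega)
          (fun P hP => hs P (Finset.mem_of_mem_erase hP))
          (fun P hP => ht P (Finset.mem_of_mem_erase hP))
          (fun P hP Q hQ hne' =>
            hds P (Finset.mem_of_mem_erase hP) Q (Finset.mem_of_mem_erase hQ) hne')
          (fun P hP Q hQ hne' =>
            hdt P (Finset.mem_of_mem_erase hP) Q (Finset.mem_of_mem_erase hQ) hne')
          (by
            intro z hz
            have hzx1 : z ≠ x₀.1 := fun h => hz (by rw [h]; exact Finset.mem_insert_self _ _)
            have hzx2 : z ≠ x₀.2 := fun h => hz (by rw [h]; exact Finset.mem_insert_of_mem (Finset.mem_insert_self _ _))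
            have hzF : z ∉ F := fun h => hz (Finset.mem_insert_of_mem (Finset.mem_insert_of_mem h))
            by_cases hzin : x₀.1 < z ∧ z < x₀.2
            · constructor
              · rintro ⟨P, hP, hP1, hP2⟩
                exfalso
                have hPx : P ≠ x₀ := (Finset.mem_erase.1 hP).1
                rcases hds P (Finset.mem_of_mem_erase hP) x₀ hx₀s hPx with h' | h'
                · linarith [hzin.1]
                · linarith [hzin.2]
              · rintro ⟨P, hP, hP1, hP2⟩
                exfalso
                have hPx : P ≠ x₀ := (Finset.mem_erase.1 hP).1
                rcases hdt P (Finset.mem_of_mem_erase hP) x₀ hy₀t hPx with h' | h'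
                · linarith [hzin.1]
                · linarith [hzin.2]
            · have hout : z < x₀.1 ∨ x₀.2 < z := by
                rcases lt_trichotomy z x₀.1 with h' | h' | h'
                · exact Or.inl h'
                · exact absurd h' hzx1
                · rcases lt_trichotomy z x₀.2 with hb | hb | hb
                  · exact absurd ⟨h', hb⟩ hzin
                  · exact absurd hb hzx2
                  · exact Or.inr hb
              constructor
              · rintro ⟨P, hP, hP1, hP2⟩
                obtain ⟨Q, hQ, hQ1, hQ2⟩ :=
                  (hm z hzF).1 ⟨P, Finset.mem_of_mem_erase hP, hP1, hP2⟩
                refine ⟨Q, Finset.mem_erase.2 ⟨?_, hQ⟩, hQ1, hQ2⟩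
                rintro rfl
                rcases hout with h' | h' <;> linarith
              · rintro ⟨Q, hQ, hQ1, hQ2⟩
                obtain ⟨P, hP, hP1, hP2⟩ :=
                  (hm z hzF).2 ⟨Q, Finset.mem_of_mem_erase hQ, hQ1, hQ2⟩
                refine ⟨P, Finset.mem_erase.2 ⟨?_, hP⟩, hP1, hP2⟩
                rintro rfl
                rcases hout with h' | h' <;> linarith)
        have e1 : ∑ P ∈ s.erase x₀, (φ P.2 - φ P.1) + (φ x₀.2 - φ x₀.1)
            = ∑ P ∈ s, (φ P.2 - φ P.1) := Finset.sum_erase_add s _ hx₀s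
        have e2 : ∑ P ∈ t.erase x₀, (φ P.2 - φ P.1) + (φ x₀.2 - φ x₀.1)
            = ∑ P ∈ t, (φ P.2 - φ P.1) := Finset.sum_erase_add t _ hy₀t
        linarith [key, e1, e2]
      · -- x₀.1 < y₀.1 : shrink x₀ to (x₀.1, y₀.1)
        set P' : ℝ × ℝ := (x₀.1, y₀.1) with hP'
        have hP'new : P' ∉ s.erase x₀ := by
          intro hmem
          obtain ⟨hne', hmem'⟩ := Finset.mem_erase.1 hmem
          rcases hds P' hmem' x₀ hx₀s hne' with h' | h'
          · simp only [hP'] at h'; linarith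
          · simp only [hP'] at h'; linarith
        have key := ih (insert P' (s.erase x₀)) (t.erase y₀)
          (insert x₀.1 (insert x₀.2 (insert y₀.1 F)))
          (by
            have d1 : (s.erase x₀).card = s.card - 1 := Finset.card_erase_of_mem hx₀s
            have d2 : (t.erase y₀).card = t.card - 1 := Finset.card_erase_of_mem hy₀t
            have d3 : (insert P' (s.erase x₀)).card = (s.erase x₀).card + 1 :=
              Finset.card_insert_of_notMem hP'new
            omega)
          (by
            intro P hP
            rcases Finset.mem_insert.1 hP with h' | h'
            · rw [h']; exact hgt
            · exact hs P (Finset.mem_of_mem_erase h'))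
          (fun P hP => ht P (Finset.mem_of_mem_erase hP))
          (by
            intro P hP Q hQ hne'
            rcases Finset.mem_insert.1 hP with hiP | hiP <;>
              rcases Finset.mem_insert.1 hQ with hiQ | hiQ
            · exact absurd (hiP.trans hiQ.symm) hne'
            · subst hiP
              have hQx : Q ≠ x₀ := (Finset.mem_erase.1 hiQ).1
              rcases hds x₀ hx₀s Q (Finset.mem_of_mem_erase hiQ) (fun h => hQx h.symm) with h' | h'
              · left; show P'.2 ≤ Q.1; simp only [hP']; linarith
              · right; show Q.2 ≤ P'.1; simp only [hP']; linarith
            · subst hiQ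
              have hPx : P ≠ x₀ := (Finset.mem_erase.1 hiP).1
              rcases hds x₀ hx₀s P (Finset.mem_of_mem_erase hiP) (fun h => hPx h.symm) with h' | h'
              · right; show P'.2 ≤ P.1; simp only [hP']; linarith
              · left; show P.2 ≤ P'.1; simp only [hP']; linarith
            · exact hds P (Finset.mem_of_mem_erase hiP) Q (Finset.mem_of_mem_erase hiQ) hne')
          (fun P hP Q hQ hne' =>
            hdt P (Finset.mem_of_mem_erase hP) Q (Finset.mem_of_mem_erase hQ) hne')
          (by
            intro z hz
            have hzx1 : z ≠ x₀.1 := fun h => hz (by rw [h]; exact Finset.mem_insert_self _ _)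
            have hzx2 : z ≠ x₀.2 := fun h => hz (by rw [h]; exact Finset.mem_insert_of_mem (Finset.mem_insert_self _ _))
            have hzy1 : z ≠ y₀.1 := fun h => hz (by rw [h]; exact Finset.mem_insert_of_mem (Finset.mem_insert_of_mem (Finset.mem_insert_self _ _)))
            have hzF : z ∉ F := fun h => hz (Finset.mem_insert_of_mem (Finset.mem_insert_of_mem (Finset.mem_insert_of_mem h)))
            by_cases hzmid : x₀.1 < z ∧ z < y₀.1
            · constructor
              · intro _
                obtain ⟨Q, hQ, hQ1, hQ2⟩ :=
                  (hm z hzF).1 ⟨x₀, hx₀s, hzmid.1, by linarith [hzmid.2]⟩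
                refine ⟨Q, Finset.mem_erase.2 ⟨?_, hQ⟩, hQ1, hQ2⟩
                rintro rfl
                linarith [hzmid.2]
              · intro _
                exact ⟨P', Finset.mem_insert_self _ _, hzmid.1, hzmid.2⟩
            · by_cases hzin : y₀.1 < z ∧ z < x₀.2
              · constructor
                · rintro ⟨P, hP, hP1, hP2⟩
                  exfalso
                  rcases Finset.mem_insert.1 hP with h' | h'
                  · subst h'; simp only [hP'] at hP1 hP2; linarith [hzin.1]
                  · have hPx : P ≠ x₀ := (Finset.mem_erase.1 h').1
                    rcases hds P (Finset.mem_of_mem_erase h') x₀ hx₀s hPx with hb | hb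
                    · linarith [hzin.1]
                    · linarith [hzin.2]
                · rintro ⟨Q, hQ, hQ1, hQ2⟩
                  exfalso
                  have hQy : Q ≠ y₀ := (Finset.mem_erase.1 hQ).1
                  rcases hdt Q (Finset.mem_of_mem_erase hQ) y₀ hy₀t hQy with hb | hb
                  · linarith [hzin.1]
                  · linarith [hzin.2]
              · have hout : z < x₀.1 ∨ x₀.2 < z := by
                  rcases lt_trichotomy z x₀.1 with h' | h' | h'
                  · exact Or.inl h'
                  · exact absurd h' hzx1
                  · rcases lt_trichotomy z y₀.1 with hb | hb | hb
                    · exact absurd ⟨h', hb⟩ hzmid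
                    · exact absurd hb hzy1
                    · rcases lt_trichotomy z x₀.2 with hcc | hcc | hcc
                      · exact absurd ⟨hb, hcc⟩ hzin
                      · exact absurd hcc hzx2
                      · exact Or.inr hcc
                constructor
                · rintro ⟨P, hP, hP1, hP2⟩
                  have hPmem : P ∈ s := by
                    rcases Finset.mem_insert.1 hP with h' | h'
                    · exfalso
                      rw [h'] at hP1 hP2
                      simp only [hP'] at hP1 hP2
                      rcases hout with hb | hb
                      · linarith
                      · linarith
                    · exact Finset.mem_of_mem_erase h'
                  obtain ⟨Q, hQ, hQ1, hQ2⟩ := (hm z hzF).1 ⟨P, hPmem, hP1, hP2⟩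
                  refine ⟨Q, Finset.mem_erase.2 ⟨?_, hQ⟩, hQ1, hQ2⟩
                  rintro rfl
                  rcases hout with hb | hb
                  · linarith
                  · linarith
                · rintro ⟨Q, hQ, hQ1, hQ2⟩
                  obtain ⟨P, hP, hP1, hP2⟩ :=
                    (hm z hzF).2 ⟨Q, Finset.mem_of_mem_erase hQ, hQ1, hQ2⟩
                  refine ⟨P, Finset.mem_insert_of_mem (Finset.mem_erase.2 ⟨?_, hP⟩), hP1, hP2⟩
                  rintro rfl
                  rcases hout with hb | hb
                  · linarith
                  · linarith)
        have e1 : ∑ P ∈ s.erase x₀, (φ P.2 - φ P.1) + (φ x₀.2 - φ x₀.1)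
            = ∑ P ∈ s, (φ P.2 - φ P.1) := Finset.sum_erase_add s _ hx₀s
        have e2 : ∑ P ∈ t.erase y₀, (φ P.2 - φ P.1) + (φ y₀.2 - φ y₀.1)
            = ∑ P ∈ t, (φ P.2 - φ P.1) := Finset.sum_erase_add t _ hy₀t
        have e3 : ∑ P ∈ insert P' (s.erase x₀), (φ P.2 - φ P.1)
            = (φ P'.2 - φ P'.1) + ∑ P ∈ s.erase x₀, (φ P.2 - φ P.1) :=
          Finset.sum_insert hP'new
        have e4 : φ P'.2 - φ P'.1 = φ y₀.1 - φ x₀.1 := by rw [hP']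
        have e5 : φ y₀.2 = φ x₀.2 := by rw [hyx]
        rw [e3, e4] at key
        linarith [key, e1, e2]

/-- The level-matching sum identity: at an interior level, for any function φ,
the sum of φ-increments over up-floors equals that over down-floors. -/
lemma sumid {n : ℕ} {a b c : Fin n → ℝ}
    (hc : ∀ j, c j ≠ 0)
    (hdisj : ∀ i j, i ≠ j → Iset (a i) (b i) (c i) ∩ Iset (a j) (b j) (c j) = ∅)
    {B H u₁ v₁ u₂ v₂ : ℝ} (hH : 0 < H)
    (hunion : (⋃ j, Sset (a j) (b j) (c j)) = Rgn B H u₁ v₁ u₂ v₂)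
    {y : ℝ} (hy1 : B < y) (hy2 : y < B + H) (φ : ℝ → ℝ) :
    ∑ i ∈ Finset.univ.filter (fun i => b i = y ∧ 0 < c i), (φ (a i + c i) - φ (a i))
      = ∑ j ∈ Finset.univ.filter (fun j => b j = y ∧ c j < 0), (φ (a j) - φ (a j + c j)) := by
  classical
  have hsub : ∀ j, Sset (a j) (b j) (c j) ⊆ Rgn B H u₁ v₁ u₂ v₂ := by
    intro j
    rw [← hunion]
    exact Set.subset_iUnion (fun j => Sset (a j) (b j) (c j)) j
  set up := Finset.univ.filter (fun i => b i = y ∧ 0 < c i) with hup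
  set dn := Finset.univ.filter (fun j => b j = y ∧ c j < 0) with hdn
  have hmemup : ∀ i, i ∈ up ↔ (b i = y ∧ 0 < c i) := by
    intro i; rw [hup, Finset.mem_filter]; simp
  have hmemdn : ∀ j, j ∈ dn ↔ (b j = y ∧ c j < 0) := by
    intro j; rw [hdn, Finset.mem_filter]; simp
  -- pairwise disjointness of up floors
  have hupdisj : ∀ i₁ ∈ up, ∀ i₂ ∈ up, i₁ ≠ i₂ →
      a i₁ + c i₁ ≤ a i₂ ∨ a i₂ + c i₂ ≤ a i₁ := by
    intro i₁ h₁ i₂ h₂ hne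
    obtain ⟨hb₁, hc₁⟩ := (hmemup i₁).1 h₁
    obtain ⟨hb₂, hc₂⟩ := (hmemup i₂).1 h₂
    by_contra hcon
    push_neg at hcon
    obtain ⟨ho1, ho2⟩ := hcon
    set x := (max (a i₁) (a i₂) + min (a i₁ + c i₁) (a i₂ + c i₂))/2 with hx
    have hml : max (a i₁) (a i₂) < min (a i₁ + c i₁) (a i₂ + c i₂) :=
      max_lt (lt_min (by linarith) ho2) (lt_min ho1 (by linarith))
    have hx1 : max (a i₁) (a i₂) < x := by rw [hx]; linarith
    have hx2 : x < min (a i₁ + c i₁) (a i₂ + c i₂) := by rw [hx]; linarith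
    set η := (min (a i₁ + c i₁) (a i₂ + c i₂) - x)/2 with hη
    have hηpos : 0 < η := by rw [hη]; linarith
    have hz1 : ((x, y + η) : ℝ × ℝ) ∈ Iset (a i₁) (b i₁) (c i₁) := by
      rw [mem_I_pos hc₁]
      refine ⟨by simp only; linarith [le_max_left (a i₁) (a i₂)],
        by simp only; linarith,
        by simp only; have := min_le_left (a i₁ + c i₁) (a i₂ + c i₂); linarith⟩
    have hz2 : ((x, y + η) : ℝ × ℝ) ∈ Iset (a i₂) (b i₂) (c i₂) := by
      rw [mem_I_pos hc₂]
      refine ⟨by simp only; linarith [le_max_right (a i₁) (a i₂)],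
        by simp only; linarith,
        by simp only; have := min_le_right (a i₁ + c i₁) (a i₂ + c i₂); linarith⟩
    exact Set.eq_empty_iff_forall_notMem.1 (hdisj i₁ i₂ hne) _ ⟨hz1, hz2⟩
  have hdndisj : ∀ j₁ ∈ dn, ∀ j₂ ∈ dn, j₁ ≠ j₂ →
      a j₁ ≤ a j₂ + c j₂ ∨ a j₂ ≤ a j₁ + c j₁ := by
    intro j₁ h₁ j₂ h₂ hne
    obtain ⟨hb₁, hc₁⟩ := (hmemdn j₁).1 h₁
    obtain ⟨hb₂, hc₂⟩ := (hmemdn j₂).1 h₂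
    by_contra hcon
    push_neg at hcon
    obtain ⟨ho1, ho2⟩ := hcon
    set x := (max (a j₁ + c j₁) (a j₂ + c j₂) + min (a j₁) (a j₂))/2 with hx
    have hml : max (a j₁ + c j₁) (a j₂ + c j₂) < min (a j₁) (a j₂) :=
      max_lt (lt_min (by linarith) ho2) (lt_min ho1 (by linarith))
    have hx1 : max (a j₁ + c j₁) (a j₂ + c j₂) < x := by rw [hx]; linarith
    have hx2 : x < min (a j₁) (a j₂) := by rw [hx]; linarith
    set η := (x - max (a j₁ + c j₁) (a j₂ + c j₂))/2 with hη
    have hηpos : 0 < η := by rw [hη]; linarith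
    have hz1 : ((x, y - η) : ℝ × ℝ) ∈ Iset (a j₁) (b j₁) (c j₁) := by
      rw [mem_I_neg hc₁]
      refine ⟨by simp only; linarith [min_le_left (a j₁) (a j₂)],
        by simp only; linarith,
        by simp only; have := le_max_left (a j₁ + c j₁) (a j₂ + c j₂); linarith⟩
    have hz2 : ((x, y - η) : ℝ × ℝ) ∈ Iset (a j₂) (b j₂) (c j₂) := by
      rw [mem_I_neg hc₂]
      refine ⟨by simp only; linarith [min_le_right (a j₁) (a j₂)],
        by simp only; linarith,
        by simp only; have := le_max_right (a j₁ + c j₁) (a j₂ + c j₂); linarith⟩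
    exact Set.eq_empty_iff_forall_notMem.1 (hdisj j₁ j₂ hne) _ ⟨hz1, hz2⟩
  set s := up.image (fun i => ((a i, a i + c i) : ℝ × ℝ)) with hset
  set t := dn.image (fun j => ((a j + c j, a j) : ℝ × ℝ)) with htset
  set F := Finset.univ.image a ∪ Finset.univ.image (fun k => a k + c k) with hF
  have hinjup : ∀ i₁ ∈ up, ∀ i₂ ∈ up,
      ((a i₁, a i₁ + c i₁) : ℝ × ℝ) = (a i₂, a i₂ + c i₂) → i₁ = i₂ := by
    intro i₁ h₁ i₂ h₂ heq
    by_contra hne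
    obtain ⟨hb₁, hc₁⟩ := (hmemup i₁).1 h₁
    have e1 : a i₁ = a i₂ := congrArg Prod.fst heq
    have e2 : a i₁ + c i₁ = a i₂ + c i₂ := congrArg Prod.snd heq
    rcases hupdisj i₁ h₁ i₂ h₂ hne with h' | h'
    · linarith
    · linarith
  have hinjdn : ∀ j₁ ∈ dn, ∀ j₂ ∈ dn,
      ((a j₁ + c j₁, a j₁) : ℝ × ℝ) = (a j₂ + c j₂, a j₂) → j₁ = j₂ := by
    intro j₁ h₁ j₂ h₂ heq
    by_contra hne
    obtain ⟨hb₁, hc₁⟩ := (hmemdn j₁).1 h₁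
    have e1 : a j₁ + c j₁ = a j₂ + c j₂ := congrArg Prod.fst heq
    have e2 : a j₁ = a j₂ := congrArg Prod.snd heq
    rcases hdndisj j₁ h₁ j₂ h₂ hne with h' | h'
    · linarith
    · linarith
  -- the pointwise matching, both ways
  have hmatch : ∀ z : ℝ, z ∉ F →
      ((∃ P ∈ s, P.1 < z ∧ z < P.2) ↔ ∃ P ∈ t, P.1 < z ∧ z < P.2) := by
    intro z hzF
    have hzs : ∀ k, z ≠ a k ∧ z ≠ a k + c k := by
      intro k
      constructor
      · intro h
        exact hzF (Finset.mem_union_left _ (Finset.mem_image.2 ⟨k, Finset.mem_univ k, h.symm⟩))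
      · intro h
        exact hzF (Finset.mem_union_right _ (Finset.mem_image.2 ⟨k, Finset.mem_univ k, h.symm⟩))
    constructor
    · rintro ⟨P, hPs, hP1, hP2⟩
      obtain ⟨i, hiup, hiP⟩ := Finset.mem_image.1 hPs
      obtain ⟨hbi, hci⟩ := (hmemup i).1 hiup
      rw [← hiP] at hP1 hP2
      simp only at hP1 hP2
      -- slice bounds at (z, y) are strict
      have hvAm : ((a i, b i) : ℝ × ℝ) ∈ Sset (a i) (b i) (c i) := (mem_S_pos hci).2
        ⟨le_refl _, le_refl _, by show a i + b i ≤ a i + b i + c i; linarith⟩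
      have hvBm : ((a i + c i, b i) : ℝ × ℝ) ∈ Sset (a i) (b i) (c i) := (mem_S_pos hci).2
        ⟨by show a i ≤ a i + c i; linarith, le_refl _,
          by show (a i + c i) + b i ≤ a i + b i + c i; linarith⟩
      have hvA := hsub i hvAm
      have hvB := hsub i hvBm
      obtain ⟨-, -, hvA3, -⟩ := hvA
      obtain ⟨-, -, -, hvB4⟩ := hvB
      simp only [hbi] at hvA3 hvB4
      have hsl : (y - B) * (u₂ - u₁) < H * (z - u₁) := by nlinarith [hvA3, hP1, hH]
      have hsr : H * (z - v₁) < (y - B) * (v₂ - v₁) := by nlinarith [hvB4, hP2, hH]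
      have hcov : ∀ δ, 0 < δ → ∃ ε, 0 < ε ∧ ε < δ ∧
          ((z, y - ε) : ℝ × ℝ) ∈ ⋃ k, Sset (a k) (b k) (c k) := by
        intro δ hδ
        obtain ⟨ε, he1, he2, he3⟩ := covdown hH hy1 (le_of_lt hy2) hsl hsr δ hδ
        exact ⟨ε, he1, he2, by rw [hunion]; exact he3⟩
      obtain ⟨j, hj1, hj2, hj3, hj4⟩ := matchdown hdisj hc hci hbi hP1 hP2 hzs hcov
      refine ⟨(a j + c j, a j), Finset.mem_image.2 ⟨j, (hmemdn j).2 ⟨hj2, hj1⟩, rfl⟩, ?_, ?_⟩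
      · simp only; exact hj3
      · simp only; exact hj4
    · rintro ⟨P, hPt, hP1, hP2⟩
      obtain ⟨j, hjdn, hjP⟩ := Finset.mem_image.1 hPt
      obtain ⟨hbj, hcj⟩ := (hmemdn j).1 hjdn
      rw [← hjP] at hP1 hP2
      simp only at hP1 hP2
      have hvAm : ((a j, b j) : ℝ × ℝ) ∈ Sset (a j) (b j) (c j) := (mem_S_neg hcj).2
        ⟨le_refl _, le_refl _, by show a j + b j + c j ≤ a j + b j; linarith⟩
      have hvBm : ((a j + c j, b j) : ℝ × ℝ) ∈ Sset (a j) (b j) (c j) := (mem_S_neg hcj).2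
        ⟨by show a j + c j ≤ a j; linarith, le_refl _,
          by show a j + b j + c j ≤ (a j + c j) + b j; linarith⟩
      have hvA := hsub j hvAm
      have hvB := hsub j hvBm
      obtain ⟨-, -, -, hvA4⟩ := hvA
      obtain ⟨-, -, hvB3, -⟩ := hvB
      simp only [hbj] at hvA4 hvB3
      have hsl : (y - B) * (u₂ - u₁) < H * (z - u₁) := by nlinarith [hvB3, hP1, hH]
      have hsr : H * (z - v₁) < (y - B) * (v₂ - v₁) := by nlinarith [hvA4, hP2, hH]
      have hcov : ∀ δ, 0 < δ → ∃ ε, 0 < ε ∧ ε < δ ∧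
          ((z, y + ε) : ℝ × ℝ) ∈ ⋃ k, Sset (a k) (b k) (c k) := by
        intro δ hδ
        obtain ⟨ε, he1, he2, he3⟩ := covup hH (le_of_lt hy1) hy2 hsl hsr δ hδ
        exact ⟨ε, he1, he2, by rw [hunion]; exact he3⟩
      obtain ⟨i, hi1, hi2, hi3, hi4⟩ := matchup hdisj hc hcj hbj hP1 hP2 hzs hcov
      refine ⟨(a i, a i + c i), Finset.mem_image.2 ⟨i, (hmemup i).2 ⟨hi2, hi1⟩, rfl⟩, ?_, ?_⟩
      · simp only; exact hi3
      · simp only; exact hi4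
  -- apply the interval sum lemma
  have hkey := intervalSum φ (s.card + t.card) s t F (le_refl _)
    (by
      intro P hP
      obtain ⟨i, hiup, hiP⟩ := Finset.mem_image.1 hP
      obtain ⟨-, hci⟩ := (hmemup i).1 hiup
      rw [← hiP]; simp only; linarith)
    (by
      intro P hP
      obtain ⟨j, hjdn, hjP⟩ := Finset.mem_image.1 hP
      obtain ⟨-, hcj⟩ := (hmemdn j).1 hjdn
      rw [← hjP]; simp only; linarith)
    (by
      intro P hP Q hQ hne
      obtain ⟨i₁, h₁, hP1⟩ := Finset.mem_image.1 hP
      obtain ⟨i₂, h₂, hP2⟩ := Finset.mem_image.1 hQ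
      have hne' : i₁ ≠ i₂ := by rintro rfl; rw [← hP1, ← hP2] at hne; exact hne rfl
      rw [← hP1, ← hP2]
      simp only
      exact hupdisj i₁ h₁ i₂ h₂ hne')
    (by
      intro P hP Q hQ hne
      obtain ⟨j₁, h₁, hP1⟩ := Finset.mem_image.1 hP
      obtain ⟨j₂, h₂, hP2⟩ := Finset.mem_image.1 hQ
      have hne' : j₁ ≠ j₂ := by rintro rfl; rw [← hP1, ← hP2] at hne; exact hne rfl
      rw [← hP1, ← hP2]
      simp only
      exact hdndisj j₁ h₁ j₂ h₂ hne')
    hmatch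
  rw [Finset.sum_image hinjup, Finset.sum_image hinjdn] at hkey
  exact hkey

/-- The key theorem in oblique coordinates. -/
theorem keythm {n : ℕ} (a b c : Fin n → ℝ) (hc : ∀ i, c i ≠ 0)
    {B H u₁ v₁ u₂ v₂ : ℝ} (hH : 0 < H) (h1 : u₁ ≤ v₁) (h2 : u₂ ≤ v₂)
    (hnd : u₁ < v₁ ∨ u₂ < v₂)
    (hdisj : ∀ i j, i ≠ j → Iset (a i) (b i) (c i) ∩ Iset (a j) (b j) (c j) = ∅)
    (hunion : (⋃ i, Sset (a i) (b i) (c i)) = Rgn B H u₁ v₁ u₂ v₂)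
    (r : ℝ → ℝ) (hrB : r B = B) (hrBH : r (B + H) = B + H)
    (hr : ∀ i, r (a i + c i) - r (a i) = r (b i + c i) - r (b i)) :
    ∀ i, r (b i) = b i ∧ r (b i + c i) = b i + c i := by
  classical
  have hsub : ∀ j, Sset (a j) (b j) (c j) ⊆ Rgn B H u₁ v₁ u₂ v₂ := by
    intro j
    rw [← hunion]
    exact Set.subset_iUnion (fun j => Sset (a j) (b j) (c j)) j
  have hbnd : ∀ i, (B ≤ b i ∧ b i ≤ B + H) ∧ (B ≤ b i + c i ∧ b i + c i ≤ B + H) := by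
    intro i
    rcases (hc i).lt_or_gt with hneg | hpos
    · have hvA : ((a i, b i) : ℝ × ℝ) ∈ Sset (a i) (b i) (c i) := (mem_S_neg hneg).2
        ⟨le_refl _, le_refl _, by show a i + b i + c i ≤ a i + b i; linarith⟩
      have hvP : ((a i, b i + c i) : ℝ × ℝ) ∈ Sset (a i) (b i) (c i) := (mem_S_neg hneg).2
        ⟨le_refl _, by show b i + c i ≤ b i; linarith,
          by show a i + b i + c i ≤ a i + (b i + c i); linarith⟩
      obtain ⟨q1, q2, -, -⟩ := hsub i hvA
      obtain ⟨q3, q4, -, -⟩ := hsub i hvP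
      exact ⟨⟨q1, q2⟩, ⟨q3, q4⟩⟩
    · have hvA : ((a i, b i) : ℝ × ℝ) ∈ Sset (a i) (b i) (c i) := (mem_S_pos hpos).2
        ⟨le_refl _, le_refl _, by show a i + b i ≤ a i + b i + c i; linarith⟩
      have hvP : ((a i, b i + c i) : ℝ × ℝ) ∈ Sset (a i) (b i) (c i) := (mem_S_pos hpos).2
        ⟨le_refl _, by show b i ≤ b i + c i; linarith,
          by show a i + (b i + c i) ≤ a i + b i + c i; linarith⟩
      obtain ⟨q1, q2, -, -⟩ := hsub i hvA
      obtain ⟨q3, q4, -, -⟩ := hsub i hvP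
      exact ⟨⟨q1, q2⟩, ⟨q3, q4⟩⟩
  set Λ : Finset ℝ := insert B (insert (B + H)
    (Finset.univ.image b ∪ Finset.univ.image (fun i => b i + c i))) with hΛ
  have hΛB : B ∈ Λ := Finset.mem_insert_self _ _
  have hΛBH : B + H ∈ Λ := Finset.mem_insert_of_mem (Finset.mem_insert_self _ _)
  have hΛb : ∀ i, b i ∈ Λ := fun i => Finset.mem_insert_of_mem (Finset.mem_insert_of_mem
    (Finset.mem_union_left _ (Finset.mem_image.2 ⟨i, Finset.mem_univ i, rfl⟩)))
  have hΛbc : ∀ i, b i + c i ∈ Λ := fun i => Finset.mem_insert_of_mem (Finset.mem_insert_of_mem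
    (Finset.mem_union_right _ (Finset.mem_image.2 ⟨i, Finset.mem_univ i, rfl⟩)))
  have hΛle : ∀ tt ∈ Λ, B ≤ tt ∧ tt ≤ B + H := by
    intro tt htt
    rcases Finset.mem_insert.1 htt with h | h
    · exact ⟨le_of_eq h.symm, by rw [h]; linarith⟩
    rcases Finset.mem_insert.1 h with h' | h'
    · exact ⟨by rw [h']; linarith, le_of_eq h'⟩
    rcases Finset.mem_union.1 h' with h'' | h''
    · obtain ⟨i, -, hi⟩ := Finset.mem_image.1 h''
      rw [← hi]
      exact (hbnd i).1
    · obtain ⟨i, -, hi⟩ := Finset.mem_image.1 h''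
      rw [← hi]
      exact (hbnd i).2
  have main : ∀ σ : ℝ → ℝ, σ B = 0 → σ (B + H) = 0 →
      (∀ i, σ (a i + c i) - σ (a i) = σ (b i + c i) - σ (b i)) →
      ∀ tt ∈ Λ, σ tt ≤ 0 := by
    intro σ hσB hσH hσr
    by_contra hcon
    push_neg at hcon
    obtain ⟨t₀, ht₀Λ, ht₀⟩ := hcon
    obtain ⟨tm, htmΛ, htmmax⟩ := Finset.exists_max_image Λ σ ⟨t₀, ht₀Λ⟩
    have hM : 0 < σ tm := lt_of_lt_of_le ht₀ (htmmax t₀ ht₀Λ)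
    set Y := Λ.filter (fun tt => σ tt = σ tm) with hY
    have htmY : tm ∈ Y := Finset.mem_filter.2 ⟨htmΛ, rfl⟩
    have hYne : Y.Nonempty := ⟨tm, htmY⟩
    set y₀ := Y.max' hYne with hy₀def
    have hy₀Y : y₀ ∈ Y := Finset.max'_mem _ _
    obtain ⟨hy₀Λ, hy₀M⟩ := Finset.mem_filter.1 hy₀Y
    have hy₀B : y₀ ≠ B := by intro h; rw [h, hσB] at hy₀M; linarith
    have hy₀BH : y₀ ≠ B + H := by intro h; rw [h, hσH] at hy₀M; linarith
    have hy₀lo : B < y₀ := lt_of_le_of_ne (hΛle y₀ hy₀Λ).1 (Ne.symm hy₀B)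
    have hy₀hi : y₀ < B + H := lt_of_le_of_ne (hΛle y₀ hy₀Λ).2 hy₀BH
    -- there is a tile whose horizontal edge is at level y₀
    have hedge : ∃ j, b j = y₀ := by
      rcases Finset.mem_insert.1 hy₀Λ with h | h
      · exact absurd h hy₀B
      rcases Finset.mem_insert.1 h with h' | h'
      · exact absurd h' hy₀BH
      rcases Finset.mem_union.1 h' with h'' | h''
      · obtain ⟨i, -, hi⟩ := Finset.mem_image.1 h''
        exact ⟨i, hi⟩
      · obtain ⟨i, -, hi⟩ := Finset.mem_image.1 h''
        rcases (hc i).lt_or_gt with hneg | hpos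
        · obtain ⟨j, hj⟩ := apexdown hc hdisj hH h1 h2 hnd hunion hneg (by rw [hi]; exact hy₀lo)
          exact ⟨j, by rw [hj, hi]⟩
        · obtain ⟨j, hj⟩ := apexlemma hc hdisj hH h1 h2 hnd hunion hpos (by rw [hi]; exact hy₀hi)
          exact ⟨j, by rw [hj, hi]⟩
    -- there is an UP tile with a horizontal edge at level y₀
    have hup : ∃ j, b j = y₀ ∧ 0 < c j := by
      obtain ⟨j₀, hj₀⟩ := hedge
      rcases (hc j₀).lt_or_gt with hneg | hpos
      · set F := Finset.univ.image a ∪ Finset.univ.image (fun k => a k + c k) with hF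
        obtain ⟨z, hzI, hzF⟩ := (Set.Ioo_infinite
          (show a j₀ + c j₀ < a j₀ by linarith)).exists_notMem_finset F
        have hzs : ∀ k, z ≠ a k ∧ z ≠ a k + c k := by
          intro k
          constructor
          · intro h
            exact hzF (Finset.mem_union_left _
              (Finset.mem_image.2 ⟨k, Finset.mem_univ k, h.symm⟩))
          · intro h
            exact hzF (Finset.mem_union_right _
              (Finset.mem_image.2 ⟨k, Finset.mem_univ k, h.symm⟩))
        have hvAm : ((a j₀, b j₀) : ℝ × ℝ) ∈ Sset (a j₀) (b j₀) (c j₀) := (mem_S_neg hneg).2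
          ⟨le_refl _, le_refl _, by show a j₀ + b j₀ + c j₀ ≤ a j₀ + b j₀; linarith⟩
        have hvBm : ((a j₀ + c j₀, b j₀) : ℝ × ℝ) ∈ Sset (a j₀) (b j₀) (c j₀) := (mem_S_neg hneg).2
          ⟨by show a j₀ + c j₀ ≤ a j₀; linarith, le_refl _,
            by show a j₀ + b j₀ + c j₀ ≤ (a j₀ + c j₀) + b j₀; linarith⟩
        obtain ⟨-, -, -, hvA4⟩ := hsub j₀ hvAm
        obtain ⟨-, -, hvB3, -⟩ := hsub j₀ hvBm
        simp only [hj₀] at hvA4 hvB3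
        obtain ⟨hz1, hz2⟩ := hzI
        have hsl : (y₀ - B) * (u₂ - u₁) < H * (z - u₁) := by nlinarith [hvB3, hH]
        have hsr : H * (z - v₁) < (y₀ - B) * (v₂ - v₁) := by nlinarith [hvA4, hH]
        have hcov : ∀ δ, 0 < δ → ∃ ε, 0 < ε ∧ ε < δ ∧
            ((z, y₀ + ε) : ℝ × ℝ) ∈ ⋃ k, Sset (a k) (b k) (c k) := by
          intro δ hδ
          obtain ⟨ε, he1, he2, he3⟩ := covup hH (le_of_lt hy₀lo) hy₀hi hsl hsr δ hδ
          exact ⟨ε, he1, he2, by rw [hunion]; exact he3⟩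
        obtain ⟨j, hjc, hjb, -, -⟩ := matchup hdisj hc hneg hj₀ hz1 hz2 hzs hcov
        exact ⟨j, hjb, hjc⟩
      · exact ⟨j₀, hj₀, hpos⟩
    obtain ⟨i₀, hi₀b, hi₀c⟩ := hup
    -- the sum identity at level y₀
    have hid := sumid hc hdisj hH hunion hy₀lo hy₀hi σ
    have hup_eq : ∑ i ∈ Finset.univ.filter (fun i => b i = y₀ ∧ 0 < c i),
        (σ (a i + c i) - σ (a i))
        = ∑ i ∈ Finset.univ.filter (fun i => b i = y₀ ∧ 0 < c i),
        (σ (b i + c i) - σ (b i)) :=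
      Finset.sum_congr rfl (fun i _ => hσr i)
    have hdn_eq : ∑ j ∈ Finset.univ.filter (fun j => b j = y₀ ∧ c j < 0),
        (σ (a j) - σ (a j + c j))
        = ∑ j ∈ Finset.univ.filter (fun j => b j = y₀ ∧ c j < 0),
        (σ (b j) - σ (b j + c j)) :=
      Finset.sum_congr rfl (fun j _ => by linarith [hσr j])
    have hid2 : ∑ i ∈ Finset.univ.filter (fun i => b i = y₀ ∧ 0 < c i),
        (σ (b i + c i) - σ (b i))
        = ∑ j ∈ Finset.univ.filter (fun j => b j = y₀ ∧ c j < 0),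
        (σ (b j) - σ (b j + c j)) := by
      rw [← hup_eq, hid, hdn_eq]
    have hterm_le : ∀ i ∈ Finset.univ.filter (fun i => b i = y₀ ∧ 0 < c i),
        σ (b i + c i) - σ (b i) ≤ 0 := by
      intro i hi
      obtain ⟨-, hbi, hci⟩ := Finset.mem_filter.1 hi
      have e1 : σ (b i) = σ tm := by rw [hbi, hy₀M]
      have e2 : σ (b i + c i) ≤ σ tm := htmmax _ (hΛbc i)
      linarith
    have hterm_ge : ∀ j ∈ Finset.univ.filter (fun j => b j = y₀ ∧ c j < 0),
        0 ≤ σ (b j) - σ (b j + c j) := by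
      intro j hj
      obtain ⟨-, hbj, hcj⟩ := Finset.mem_filter.1 hj
      have e1 : σ (b j) = σ tm := by rw [hbj, hy₀M]
      have e2 : σ (b j + c j) ≤ σ tm := htmmax _ (hΛbc j)
      linarith
    have hL0 : ∑ i ∈ Finset.univ.filter (fun i => b i = y₀ ∧ 0 < c i),
        (σ (b i + c i) - σ (b i)) = 0 := by
      apply le_antisymm (Finset.sum_nonpos hterm_le)
      rw [hid2]
      exact Finset.sum_nonneg hterm_ge
    have hall := (Finset.sum_eq_zero_iff_of_nonpos hterm_le).1 hL0
    have hi₀mem : i₀ ∈ Finset.univ.filter (fun i => b i = y₀ ∧ 0 < c i) :=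
      Finset.mem_filter.2 ⟨Finset.mem_univ i₀, hi₀b, hi₀c⟩
    have hi₀term := hall i₀ hi₀mem
    have hi₀Y : b i₀ + c i₀ ∈ Y := Finset.mem_filter.2 ⟨hΛbc i₀, by
      have e1 : σ (b i₀) = σ tm := by rw [hi₀b, hy₀M]
      linarith⟩
    have := Finset.le_max' Y _ hi₀Y
    rw [← hy₀def] at this
    linarith [hi₀b ▸ this]
  have hzero : ∀ tt ∈ Λ, r tt = tt := by
    intro tt htt
    have hm1 := main (fun u => r u - u) (by simp [hrB]) (by simp [hrBH])
      (fun i => by linarith [hr i]) tt htt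
    have hm2 := main (fun u => -(r u - u)) (by simp [hrB]) (by simp [hrBH])
      (fun i => by linarith [hr i]) tt htt
    linarith
  intro i
  exact ⟨hzero (b i) (hΛb i), hzero (b i + c i) (hΛbc i)⟩

/-- Interior of a positive tile. -/
lemma interior_Sset_pos {a b c : ℝ} (h : 0 < c) : interior (Sset a b c) = Iset a b c := by
  apply Set.Subset.antisymm
  · intro p hp
    rw [mem_interior_iff_mem_nhds, Metric.mem_nhds_iff] at hp
    obtain ⟨ε, hε, hball⟩ := hp
    have hmem : ∀ q : ℝ × ℝ, dist q p < ε → q ∈ Sset a b c := fun q hq => hball hq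
    have h1 : ((p.1 - ε/2, p.2) : ℝ × ℝ) ∈ Sset a b c := by
      apply hmem
      rw [Prod.dist_eq]
      apply max_lt
      · have e : p.1 - ε/2 - p.1 = -(ε/2) := by ring
        rw [Real.dist_eq, e, abs_neg, abs_of_pos (by linarith)]
        linarith
      · rw [Real.dist_eq, sub_self, abs_zero]; linarith
    have h2 : ((p.1, p.2 - ε/2) : ℝ × ℝ) ∈ Sset a b c := by
      apply hmem
      rw [Prod.dist_eq]
      apply max_lt
      · rw [Real.dist_eq, sub_self, abs_zero]; linarith
      · have e : p.2 - ε/2 - p.2 = -(ε/2) := by ring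
        rw [Real.dist_eq, e, abs_neg, abs_of_pos (by linarith)]
        linarith
    have h3 : ((p.1 + ε/4, p.2 + ε/4) : ℝ × ℝ) ∈ Sset a b c := by
      apply hmem
      rw [Prod.dist_eq]
      apply max_lt
      · have e : p.1 + ε/4 - p.1 = ε/4 := by ring
        rw [Real.dist_eq, e, abs_of_pos (by linarith)]
        linarith
      · have e : p.2 + ε/4 - p.2 = ε/4 := by ring
        rw [Real.dist_eq, e, abs_of_pos (by linarith)]
        linarith
    rw [mem_S_pos h] at h1 h2 h3
    simp only at h1 h2 h3
    rw [mem_I_pos h]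
    exact ⟨by linarith [h1.1], by linarith [h2.2.1], by linarith [h3.2.2]⟩
  · have hopen : IsOpen {p : ℝ × ℝ | a < p.1 ∧ b < p.2 ∧ p.1 + p.2 < a + b + c} := by
      have o1 : IsOpen {p : ℝ × ℝ | a < p.1} := isOpen_lt continuous_const continuous_fst
      have o2 : IsOpen {p : ℝ × ℝ | b < p.2} := isOpen_lt continuous_const continuous_snd
      have o3 : IsOpen {p : ℝ × ℝ | p.1 + p.2 < a + b + c} :=
        isOpen_lt (continuous_fst.add continuous_snd) continuous_const
      exact o1.inter (o2.inter o3)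
    have hIS : Iset a b c = {p : ℝ × ℝ | a < p.1 ∧ b < p.2 ∧ p.1 + p.2 < a + b + c} :=
      Set.ext fun p => mem_I_pos h
    rw [hIS]
    apply interior_maximal _ hopen
    intro p hp
    exact (mem_S_pos h).2 ⟨le_of_lt hp.1, le_of_lt hp.2.1, le_of_lt hp.2.2⟩

/-- Interior of a negative tile. -/
lemma interior_Sset_neg {a b c : ℝ} (h : c < 0) : interior (Sset a b c) = Iset a b c := by
  apply Set.Subset.antisymm
  · intro p hp
    rw [mem_interior_iff_mem_nhds, Metric.mem_nhds_iff] at hp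
    obtain ⟨ε, hε, hball⟩ := hp
    have hmem : ∀ q : ℝ × ℝ, dist q p < ε → q ∈ Sset a b c := fun q hq => hball hq
    have h1 : ((p.1 + ε/2, p.2) : ℝ × ℝ) ∈ Sset a b c := by
      apply hmem
      rw [Prod.dist_eq]
      apply max_lt
      · have e : p.1 + ε/2 - p.1 = ε/2 := by ring
        rw [Real.dist_eq, e, abs_of_pos (by linarith)]
        linarith
      · rw [Real.dist_eq, sub_self, abs_zero]; linarith
    have h2 : ((p.1, p.2 + ε/2) : ℝ × ℝ) ∈ Sset a b c := by
      apply hmem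
      rw [Prod.dist_eq]
      apply max_lt
      · rw [Real.dist_eq, sub_self, abs_zero]; linarith
      · have e : p.2 + ε/2 - p.2 = ε/2 := by ring
        rw [Real.dist_eq, e, abs_of_pos (by linarith)]
        linarith
    have h3 : ((p.1 - ε/4, p.2 - ε/4) : ℝ × ℝ) ∈ Sset a b c := by
      apply hmem
      rw [Prod.dist_eq]
      apply max_lt
      · have e : p.1 - ε/4 - p.1 = -(ε/4) := by ring
        rw [Real.dist_eq, e, abs_neg, abs_of_pos (by linarith)]
        linarith
      · have e : p.2 - ε/4 - p.2 = -(ε/4) := by ring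
        rw [Real.dist_eq, e, abs_neg, abs_of_pos (by linarith)]
        linarith
    rw [mem_S_neg h] at h1 h2 h3
    simp only at h1 h2 h3
    rw [mem_I_neg h]
    exact ⟨by linarith [h1.1], by linarith [h2.2.1], by linarith [h3.2.2]⟩
  · have hopen : IsOpen {p : ℝ × ℝ | p.1 < a ∧ p.2 < b ∧ a + b + c < p.1 + p.2} := by
      have o1 : IsOpen {p : ℝ × ℝ | p.1 < a} := isOpen_lt continuous_fst continuous_const
      have o2 : IsOpen {p : ℝ × ℝ | p.2 < b} := isOpen_lt continuous_snd continuous_const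
      have o3 : IsOpen {p : ℝ × ℝ | a + b + c < p.1 + p.2} :=
        isOpen_lt continuous_const (continuous_fst.add continuous_snd)
      exact o1.inter (o2.inter o3)
    have hIS : Iset a b c = {p : ℝ × ℝ | p.1 < a ∧ p.2 < b ∧ a + b + c < p.1 + p.2} :=
      Set.ext fun p => mem_I_neg h
    rw [hIS]
    apply interior_maximal _ hopen
    intro p hp
    exact (mem_S_neg h).2 ⟨le_of_lt hp.1, le_of_lt hp.2.1, le_of_lt hp.2.2⟩

lemma interior_Sset {a b c : ℝ} (h : c ≠ 0) : interior (Sset a b c) = Iset a b c := by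
  rcases h.lt_or_gt with h' | h'
  · exact interior_Sset_neg h'
  · exact interior_Sset_pos h'

lemma convex_Rgn (B H u₁ v₁ u₂ v₂ : ℝ) : Convex ℝ (Rgn B H u₁ v₁ u₂ v₂) := by
  intro p hp q hq α β hα hβ hαβ
  obtain ⟨hp1, hp2, hp3, hp4⟩ := hp
  obtain ⟨hq1, hq2, hq3, hq4⟩ := hq
  have hc1 : (α • p + β • q).1 = α * p.1 + β * q.1 := by
    simp [Prod.fst_add, Prod.smul_fst, smul_eq_mul]
  have hc2 : (α • p + β • q).2 = α * p.2 + β * q.2 := by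
    simp [Prod.snd_add, Prod.smul_snd, smul_eq_mul]
  have e1 := mul_le_mul_of_nonneg_left hp1 hα
  have e2 := mul_le_mul_of_nonneg_left hq1 hβ
  have e3 := mul_le_mul_of_nonneg_left hp2 hα
  have e4 := mul_le_mul_of_nonneg_left hq2 hβ
  have e5 := mul_le_mul_of_nonneg_left hp3 hα
  have e6 := mul_le_mul_of_nonneg_left hq3 hβ
  have e7 := mul_le_mul_of_nonneg_left hp4 hα
  have e8 := mul_le_mul_of_nonneg_left hq4 hβ
  have ebrB : α * B + β * B = B := by rw [← add_mul, hαβ, one_mul]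
  have ebrBH : α * (B + H) + β * (B + H) = B + H := by rw [← add_mul, hαβ, one_mul]
  have ebr1 : α * (B * (u₂ - u₁)) + β * (B * (u₂ - u₁)) = B * (u₂ - u₁) := by
    rw [← add_mul, hαβ, one_mul]
  have ebr2 : α * (H * u₁) + β * (H * u₁) = H * u₁ := by rw [← add_mul, hαβ, one_mul]
  have ebr3 : α * (B * (v₂ - v₁)) + β * (B * (v₂ - v₁)) = B * (v₂ - v₁) := by
    rw [← add_mul, hαβ, one_mul]
  have ebr4 : α * (H * v₁) + β * (H * v₁) = H * v₁ := by rw [← add_mul, hαβ, one_mul]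
  refine ⟨?_, ?_, ?_, ?_⟩
  · rw [hc2]; linarith
  · rw [hc2]; linarith
  · rw [hc1, hc2]; nlinarith [e5, e6, ebr1, ebr2]
  · rw [hc1, hc2]; nlinarith [e7, e8, ebr3, ebr4]

lemma hull_pair_horiz {xa xb x yl : ℝ} (hxa : xa ≤ x) (hxb : x ≤ xb) {V : Set (ℝ × ℝ)}
    (h₁ : ((xa, yl) : ℝ × ℝ) ∈ V) (h₂ : ((xb, yl) : ℝ × ℝ) ∈ V) :
    ((x, yl) : ℝ × ℝ) ∈ convexHull ℝ V := by
  rcases eq_or_lt_of_le (hxa.trans hxb) with heq | hlt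
  · have hx : x = xa := le_antisymm (by rw [heq]; exact hxb) hxa
    rw [hx]
    exact subset_convexHull ℝ V h₁
  · set θ := (x - xa)/(xb - xa) with hθ
    have hne : xb - xa ≠ 0 := by intro h; rw [sub_eq_zero] at h; rw [h] at hlt; exact lt_irrefl _ hlt
    have hθ0 : 0 ≤ θ := div_nonneg (by linarith) (by linarith)
    have hθ1 : θ ≤ 1 := by
      rw [hθ, div_le_one (by linarith)]
      linarith
    have hcomb : ((x, yl) : ℝ × ℝ) = (1 - θ) • ((xa, yl) : ℝ × ℝ) + θ • ((xb, yl) : ℝ × ℝ) := by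
      have hfst : (1 - θ) * xa + θ * xb = x := by
        rw [hθ]
        field_simp
        ring
      have hsnd : (1 - θ) * yl + θ * yl = yl := by ring
      rw [Prod.smul_mk, Prod.smul_mk, Prod.mk_add_mk]
      simp only [smul_eq_mul]
      rw [hfst, hsnd]
    rw [hcomb]
    exact (convex_convexHull ℝ V) (subset_convexHull ℝ V h₁) (subset_convexHull ℝ V h₂)
      (by linarith) hθ0 (by ring)

lemma hull_combo {V : Set (ℝ × ℝ)} {q₁ q₂ : ℝ × ℝ} (h₁ : q₁ ∈ convexHull ℝ V)
    (h₂ : q₂ ∈ convexHull ℝ V) {θ : ℝ} (h0 : 0 ≤ θ) (hθ : θ ≤ 1) :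
    (1 - θ) • q₁ + θ • q₂ ∈ convexHull ℝ V :=
  (convex_convexHull ℝ V) h₁ h₂ (by linarith) h0 (by ring)

lemma hull4 {B H u₁ v₁ u₂ v₂ : ℝ} (hH : 0 < H) (h1 : u₁ ≤ v₁) (h2 : u₂ ≤ v₂) :
    convexHull ℝ {((u₁, B) : ℝ × ℝ), (v₁, B), (u₂, B + H), (v₂, B + H)}
      = Rgn B H u₁ v₁ u₂ v₂ := by
  apply Set.Subset.antisymm
  · apply convexHull_min _ (convex_Rgn B H u₁ v₁ u₂ v₂)
    intro x hx
    have hx' := hx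
    simp only [Set.mem_insert_iff, Set.mem_singleton_iff] at hx'
    have hq1 : 0 ≤ H * (v₁ - u₁) := mul_nonneg hH.le (by linarith)
    have hq2 : 0 ≤ H * (v₂ - u₂) := mul_nonneg hH.le (by linarith)
    rcases hx' with rfl | rfl | rfl | rfl <;>
      exact ⟨by simp only; nlinarith [hq1, hq2], by simp only; nlinarith [hq1, hq2],
        by simp only; nlinarith [hq1, hq2], by simp only; nlinarith [hq1, hq2]⟩
  · intro p hp
    obtain ⟨hp1, hp2, hp3, hp4⟩ := hp
    set V : Set (ℝ × ℝ) := {((u₁, B) : ℝ × ℝ), (v₁, B), (u₂, B + H), (v₂, B + H)} with hV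
    have hm1 : ((u₁, B) : ℝ × ℝ) ∈ V := by rw [hV]; left; rfl
    have hm2 : ((v₁, B) : ℝ × ℝ) ∈ V := by rw [hV]; right; left; rfl
    have hm3 : ((u₂, B + H) : ℝ × ℝ) ∈ V := by rw [hV]; right; right; left; rfl
    have hm4 : ((v₂, B + H) : ℝ × ℝ) ∈ V := by rw [hV]; right; right; right; rfl
    set τ := (p.2 - B)/H with hτ
    have hPB : p.2 - B = τ * H := by rw [hτ]; field_simp
    have hτ0 : 0 ≤ τ := div_nonneg (by linarith) hH.le
    have hτ1 : τ ≤ 1 := by rw [hτ, div_le_one hH]; linarith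
    -- bounds for the split point
    have hv : p.1 - v₁ ≤ τ * (v₂ - v₁) := by
      have h' : H * (p.1 - v₁) ≤ H * (τ * (v₂ - v₁)) := by
        rw [hPB] at hp4
        linarith [hp4]
      exact (mul_le_mul_iff_right₀ hH).1 h'
    have hu : τ * (u₂ - u₁) ≤ p.1 - u₁ := by
      have h' : H * (τ * (u₂ - u₁)) ≤ H * (p.1 - u₁) := by
        rw [hPB] at hp3
        linarith [hp3]
      exact (mul_le_mul_iff_right₀ hH).1 h'
    set w := max ((1 - τ)*u₁) (p.1 - τ*v₂) with hw
    have hwl : (1 - τ)*u₁ ≤ w := le_max_left _ _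
    have hwl2 : p.1 - τ*v₂ ≤ w := le_max_right _ _
    have hwr1 : w ≤ (1 - τ)*v₁ := by
      apply max_le
      · exact mul_le_mul_of_nonneg_left h1 (by linarith)
      · nlinarith [hv]
    have hwr2 : w ≤ p.1 - τ*u₂ := by
      apply max_le
      · nlinarith [hu]
      · nlinarith [mul_le_mul_of_nonneg_left h2 hτ0]
    by_cases hτe : τ = 1
    · -- p is on the top edge
      have hp2e : p.2 = B + H := by rw [hτe] at hPB; linarith
      have hu2 : u₂ ≤ p.1 := by rw [hτe] at hu; linarith
      have hv2 : p.1 ≤ v₂ := by rw [hτe] at hv; linarith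
      have : p = ((p.1, B + H) : ℝ × ℝ) := by
        rw [← hp2e]
      rw [this]
      exact hull_pair_horiz hu2 hv2 hm3 hm4
    · have hτlt : τ < 1 := lt_of_le_of_ne hτ1 hτe
      have h1τ : (0:ℝ) < 1 - τ := by linarith
      set xb := w / (1 - τ) with hxb
      have hxbl : u₁ ≤ xb := by
        rw [hxb, le_div_iff₀ h1τ]
        linarith [hwl]
      have hxbr : xb ≤ v₁ := by
        rw [hxb, div_le_iff₀ h1τ]
        linarith [hwr1]
      have hPb : ((xb, B) : ℝ × ℝ) ∈ convexHull ℝ V := hull_pair_horiz hxbl hxbr hm1 hm2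
      by_cases hτ0e : τ = 0
      · have hp2e : p.2 = B := by rw [hτ0e] at hPB; linarith
        have hwp : w = p.1 := by
          apply le_antisymm
          · rw [hτ0e] at hwr2; linarith
          · rw [hτ0e] at hwl2; linarith
        have hxbe : xb = p.1 := by rw [hxb, hτ0e, hwp]; simp
        have : p = ((xb, B) : ℝ × ℝ) := by
          rw [hxbe, ← hp2e]
        rw [this]
        exact hPb
      · have hτpos : 0 < τ := lt_of_le_of_ne hτ0 (Ne.symm hτ0e)
        set xt := (p.1 - w) / τ with hxt
        have hxtl : u₂ ≤ xt := by
          rw [hxt, le_div_iff₀ hτpos]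
          linarith [hwr2]
        have hxtr : xt ≤ v₂ := by
          rw [hxt, div_le_iff₀ hτpos]
          linarith [hwl2]
        have hPt : ((xt, B + H) : ℝ × ℝ) ∈ convexHull ℝ V := hull_pair_horiz hxtl hxtr hm3 hm4
        have hcomb : p = (1 - τ) • ((xb, B) : ℝ × ℝ) + τ • ((xt, B + H) : ℝ × ℝ) := by
          rw [Prod.smul_mk, Prod.smul_mk, Prod.mk_add_mk]
          simp only [smul_eq_mul]
          have hfst : (1 - τ) * xb + τ * xt = p.1 := by
            rw [hxb, hxt]
            field_simp
            ring
          have hsnd : (1 - τ) * B + τ * (B + H) = p.2 := by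
            have : p.2 = B + τ * H := by linarith [hPB]
            rw [this]; ring
          rw [hfst, hsnd]
        rw [hcomb]
        exact hull_combo hPb hPt hτ0 hτ1

/-- Oblique coordinate map: Ψ(a,b) = a·(1,0) + b·(1/2, √3/2). -/
noncomputable def Psi (a b : ℝ) : ℝ × ℝ := (a + b / 2, Real.sqrt 3 * b / 2)

/-- T(a,b,c): the equilateral triangle with vertices Ψ(a,b), Ψ(a+c,b), Ψ(a,b+c). -/
noncomputable def Tri (a b c : ℝ) : Set (ℝ × ℝ) :=
  convexHull ℝ {Psi a b, Psi (a + c) b, Psi a (b + c)}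

lemma sqrt3_pos : 0 < Real.sqrt 3 := Real.sqrt_pos.mpr (by norm_num)

/-- The shear and scale taking oblique coordinates to the plane. -/
noncomputable def eMap : (ℝ × ℝ) ≃ₜ (ℝ × ℝ) where
  toFun p := (p.1 + p.2 / 2, Real.sqrt 3 * p.2 / 2)
  invFun q := (q.1 - q.2 / Real.sqrt 3, 2 * q.2 / Real.sqrt 3)
  left_inv p := by
    have h3 := sqrt3_pos.ne'
    apply Prod.ext
    · show p.1 + p.2 / 2 - (Real.sqrt 3 * p.2 / 2) / Real.sqrt 3 = p.1
      field_simp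
      try ring
    · show 2 * (Real.sqrt 3 * p.2 / 2) / Real.sqrt 3 = p.2
      field_simp
      try ring
  right_inv q := by
    have h3 := sqrt3_pos.ne'
    apply Prod.ext
    · show q.1 - q.2 / Real.sqrt 3 + 2 * q.2 / Real.sqrt 3 / 2 = q.1
      field_simp
      try ring
    · show Real.sqrt 3 * (2 * q.2 / Real.sqrt 3) / 2 = q.2
      field_simp
      try ring
  continuous_toFun := by
    apply Continuous.prodMk
    · exact continuous_fst.add (continuous_snd.div_const 2)
    · exact (continuous_const.mul continuous_snd).div_const 2
  continuous_invFun := by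
    apply Continuous.prodMk
    · exact continuous_fst.sub (continuous_snd.div_const _)
    · exact (continuous_const.mul continuous_snd).div_const _

lemma eMap_lin : IsLinearMap ℝ (eMap : ℝ × ℝ → ℝ × ℝ) := by
  constructor
  · intro p q
    show ((p + q).1 + (p + q).2 / 2, Real.sqrt 3 * (p + q).2 / 2) = _
    apply Prod.ext
    · show (p + q).1 + (p + q).2 / 2 = (p.1 + p.2/2) + (q.1 + q.2/2)
      rw [Prod.fst_add, Prod.snd_add]
      ring
    · show Real.sqrt 3 * (p + q).2 / 2 = (Real.sqrt 3 * p.2 / 2) + (Real.sqrt 3 * q.2 / 2)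
      rw [Prod.snd_add]
      ring
  · intro m p
    show ((m • p).1 + (m • p).2 / 2, Real.sqrt 3 * (m • p).2 / 2) = _
    apply Prod.ext
    · show (m • p).1 + (m • p).2 / 2 = m * (p.1 + p.2/2)
      rw [Prod.smul_fst, Prod.smul_snd, smul_eq_mul, smul_eq_mul]
      ring
    · show Real.sqrt 3 * (m • p).2 / 2 = m * (Real.sqrt 3 * p.2 / 2)
      rw [Prod.smul_snd, smul_eq_mul]
      ring

lemma ePsi (x y : ℝ) : Psi x y = eMap (x, y) := rfl

lemma Sset_pos_Rgn {a b c : ℝ} (h : 0 < c) : Sset a b c = Rgn b c a (a + c) a a := by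
  ext p
  rw [mem_S_pos h]
  constructor
  · rintro ⟨h1, h2, h3⟩
    refine ⟨h2, by linarith, ?_, ?_⟩
    · nlinarith [mul_nonneg h.le (sub_nonneg.2 h1)]
    · nlinarith [mul_nonneg h.le (show (0:ℝ) ≤ a + b + c - p.1 - p.2 by linarith)]
  · rintro ⟨h1, h2, h3, h4⟩
    have e1 : c * 0 ≤ c * (p.1 - a) := by nlinarith [h3]
    have e2 := (mul_le_mul_iff_right₀ h).1 e1
    have e3 : c * (p.1 + p.2 - (a + b + c)) ≤ c * 0 := by nlinarith [h4]
    have e4 := (mul_le_mul_iff_right₀ h).1 e3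
    exact ⟨by linarith, h1, by linarith⟩

lemma Sset_neg_Rgn {a b c : ℝ} (h : c < 0) : Sset a b c = Rgn (b + c) (-c) a a (a + c) a := by
  ext p
  rw [mem_S_neg h]
  constructor
  · rintro ⟨h1, h2, h3⟩
    refine ⟨by linarith, by linarith, ?_, ?_⟩
    · nlinarith [mul_nonneg (neg_nonneg.2 h.le) (show (0:ℝ) ≤ p.1 + p.2 - (a + b + c) by linarith)]
    · nlinarith [mul_nonneg (neg_nonneg.2 h.le) (sub_nonneg.2 h1)]
  · rintro ⟨h1, h2, h3, h4⟩
    have e1 : (-c) * (p.1 - a) ≤ (-c) * 0 := by nlinarith [h4]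
    have e2 := (mul_le_mul_iff_right₀ (neg_pos.2 h)).1 e1
    have e3 : (-c) * 0 ≤ (-c) * (p.1 + p.2 - (a + b + c)) := by nlinarith [h3]
    have e4 := (mul_le_mul_iff_right₀ (neg_pos.2 h)).1 e3
    exact ⟨by linarith, by linarith, by linarith⟩

lemma hull3 {a b c : ℝ} (h : c ≠ 0) :
    convexHull ℝ {((a, b) : ℝ × ℝ), (a + c, b), (a, b + c)} = Sset a b c := by
  rcases h.lt_or_gt with hneg | hpos
  · have h4 := hull4 (B := b + c) (H := -c) (u₁ := a) (v₁ := a) (u₂ := a + c) (v₂ := a)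
      (by linarith) (le_refl a) (by linarith)
    have hBc : b + c + -c = b := by ring
    rw [hBc] at h4
    have hset : ({((a, b + c) : ℝ × ℝ), (a, b + c), (a + c, b), (a, b)} : Set (ℝ × ℝ))
        = {((a, b) : ℝ × ℝ), (a + c, b), (a, b + c)} := by
      ext q
      simp only [Set.mem_insert_iff, Set.mem_singleton_iff]
      tauto
    rw [hset] at h4
    rw [h4, Sset_neg_Rgn hneg]
  · have h4 := hull4 (B := b) (H := c) (u₁ := a) (v₁ := a + c) (u₂ := a) (v₂ := a)
      hpos (by linarith) (le_refl a)
    have hset : ({((a, b) : ℝ × ℝ), (a + c, b), (a, b + c), (a, b + c)} : Set (ℝ × ℝ))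
        = {((a, b) : ℝ × ℝ), (a + c, b), (a, b + c)} := by
      ext q
      simp only [Set.mem_insert_iff, Set.mem_singleton_iff]
      tauto
    rw [hset] at h4
    rw [h4, Sset_pos_Rgn hpos]

lemma Tri_eq {a b c : ℝ} (h : c ≠ 0) : Tri a b c = eMap '' Sset a b c := by
  rw [Tri, ePsi, ePsi, ePsi]
  have himg : ({eMap (a, b), eMap (a + c, b), eMap (a, b + c)} : Set (ℝ × ℝ))
      = eMap '' {((a, b) : ℝ × ℝ), (a + c, b), (a, b + c)} := by
    simp only [Set.image_insert_eq, Set.image_singleton]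
  rw [himg, ← eMap_lin.image_convexHull, hull3 h]

lemma interior_Tri {a b c : ℝ} (h : c ≠ 0) : interior (Tri a b c) = eMap '' Iset a b c := by
  rw [Tri_eq h, ← Homeomorph.image_interior, interior_Sset h]

/-- If an equilateral triangle T(A,B,C), or a trapezoid with parallel sides on the
horizontal lines of oblique second coordinate B and B+C, is tiled by equilateral
triangles T(aᵢ,bᵢ,cᵢ), and r : ℝ → ℝ satisfies r(B)=B, r(B+C)=B+C and
r(aᵢ+cᵢ)−r(aᵢ) = r(bᵢ+cᵢ)−r(bᵢ) for all i, then r(bᵢ)=bᵢ and r(bᵢ+cᵢ)=bᵢ+cᵢ. -/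
theorem triangle_tiling_function_fixed
    (B C : ℝ) (hC : C ≠ 0) (T : Set (ℝ × ℝ))
    (hT : (∃ A, T = Tri A B C) ∨
      (∃ u₁ v₁ u₂ v₂ : ℝ, u₁ < v₁ ∧ u₂ < v₂ ∧
        T = convexHull ℝ {Psi u₁ B, Psi v₁ B, Psi u₂ (B + C), Psi v₂ (B + C)}))
    (n : ℕ) (a b c : Fin n → ℝ) (hc : ∀ i, c i ≠ 0)
    (hdisj : ∀ i j, i ≠ j →
      interior (Tri (a i) (b i) (c i)) ∩ interior (Tri (a j) (b j) (c j)) = ∅)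
    (hunion : (⋃ i, Tri (a i) (b i) (c i)) = T)
    (r : ℝ → ℝ) (hrB : r B = B) (hrBC : r (B + C) = B + C)
    (hr : ∀ i, r (a i + c i) - r (a i) = r (b i + c i) - r (b i)) :
    ∀ i, r (b i) = b i ∧ r (b i + c i) = b i + c i := by
  classical
  have hdisjO : ∀ i j, i ≠ j → Iset (a i) (b i) (c i) ∩ Iset (a j) (b j) (c j) = ∅ := by
    intro i j hij
    have hd := hdisj i j hij
    rw [interior_Tri (hc i), interior_Tri (hc j), ← Set.image_inter eMap.injective] at hd
    exact Set.image_eq_empty.1 hd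
  have hImg : ∀ R : Set (ℝ × ℝ), T = eMap '' R → (⋃ i, Sset (a i) (b i) (c i)) = R := by
    intro R hTR
    have h1 : (⋃ i, Tri (a i) (b i) (c i)) = eMap '' ⋃ i, Sset (a i) (b i) (c i) := by
      rw [Set.image_iUnion]
      exact Set.iUnion_congr fun i => Tri_eq (hc i)
    have h2 : eMap '' (⋃ i, Sset (a i) (b i) (c i)) = eMap '' R := by
      rw [← h1, hunion, hTR]
    exact Set.image_injective.mpr eMap.injective h2
  rcases hT with ⟨A, hTA⟩ | ⟨u₁, v₁, u₂, v₂, hu1, hu2, hTeq⟩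
  · rcases hC.lt_or_gt with hneg | hpos
    · have hO : (⋃ i, Sset (a i) (b i) (c i)) = Rgn (B + C) (-C) A A (A + C) A :=
        hImg _ (by rw [hTA, Tri_eq hC, Sset_neg_Rgn hneg])
      have htop : r (B + C + -C) = B + C + -C := by
        have he : B + C + -C = B := by ring
        rw [he]; exact hrB
      exact keythm a b c hc (by linarith) (le_refl A) (by linarith)
        (Or.inr (by linarith)) hdisjO hO r hrBC htop hr
    · have hO : (⋃ i, Sset (a i) (b i) (c i)) = Rgn B C A (A + C) A A :=
        hImg _ (by rw [hTA, Tri_eq hC, Sset_pos_Rgn hpos])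
      exact keythm a b c hc hpos (by linarith) (le_refl A)
        (Or.inl (by linarith)) hdisjO hO r hrB hrBC hr
  · rcases hC.lt_or_gt with hneg | hpos
    · have h4 := hull4 (B := B + C) (H := -C) (u₁ := u₂) (v₁ := v₂) (u₂ := u₁) (v₂ := v₁)
        (by linarith) (le_of_lt hu2) (le_of_lt hu1)
      have hBc : B + C + -C = B := by ring
      rw [hBc] at h4
      have hset : ({((u₂, B + C) : ℝ × ℝ), (v₂, B + C), (u₁, B), (v₁, B)} : Set (ℝ × ℝ))
          = {((u₁, B) : ℝ × ℝ), (v₁, B), (u₂, B + C), (v₂, B + C)} := by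
        ext q
        simp only [Set.mem_insert_iff, Set.mem_singleton_iff]
        tauto
      rw [hset] at h4
      have hO : (⋃ i, Sset (a i) (b i) (c i)) = Rgn (B + C) (-C) u₂ v₂ u₁ v₁ := by
        apply hImg
        rw [hTeq, ePsi, ePsi, ePsi, ePsi]
        have himg : ({eMap (u₁, B), eMap (v₁, B), eMap (u₂, B + C), eMap (v₂, B + C)} :
            Set (ℝ × ℝ)) = eMap '' {((u₁, B) : ℝ × ℝ), (v₁, B), (u₂, B + C), (v₂, B + C)} := by
          simp only [Set.image_insert_eq, Set.image_singleton]
        rw [himg, ← eMap_lin.image_convexHull, h4]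
      have htop : r (B + C + -C) = B + C + -C := by
        have he : B + C + -C = B := by ring
        rw [he]; exact hrB
      exact keythm a b c hc (by linarith) (le_of_lt hu2) (le_of_lt hu1)
        (Or.inl hu2) hdisjO hO r hrBC htop hr
    · have h4 := hull4 (B := B) (H := C) (u₁ := u₁) (v₁ := v₁) (u₂ := u₂) (v₂ := v₂)
        hpos (le_of_lt hu1) (le_of_lt hu2)
      have hO : (⋃ i, Sset (a i) (b i) (c i)) = Rgn B C u₁ v₁ u₂ v₂ := by
        apply hImg
        rw [hTeq, ePsi, ePsi, ePsi, ePsi]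
        have himg : ({eMap (u₁, B), eMap (v₁, B), eMap (u₂, B + C), eMap (v₂, B + C)} :
            Set (ℝ × ℝ)) = eMap '' {((u₁, B) : ℝ × ℝ), (v₁, B), (u₂, B + C), (v₂, B + C)} := by
          simp only [Set.image_insert_eq, Set.image_singleton]
        rw [himg, ← eMap_lin.image_convexHull, h4]
      exact keythm a b c hc hpos (le_of_lt hu1) (le_of_lt hu2)
        (Or.inl hu1) hdisjO hO r hrB hrBC hr
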